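/- arXiv:2407.07363 — 5 statements merged into one kernel-verified Lean document; each statement's English description precedes it below -/
import Mathlib

section
/- Let G be a finite group admitting an injective group homomorphism into the three-fold product O(2) × O(2) × O(2), where O(2) = Matrix.orthogonalGroup (Fin 2) ℝ. Suppose there exists a cyclic normal subgroup N of G containing every nilpotent normal subgroup of G (i.e., the Fitting subgroup F(G) is cyclic). Then G has a cyclic normal subgroup H such that the quotient group G/H is a 2-group (i.e., G belongs to the family 𝒢₁² of Oliver's classification). -/
private lemma so2_entries (M : Matrix (Fin 2) (Fin 2) ℝ)
    (hM : M * star M = 1) (hdM : M.det = 1) :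
    M 1 1 = M 0 0 ∧ M 1 0 = -(M 0 1) := by
  have h00 : M 0 0 * M 0 0 + M 0 1 * M 0 1 = 1 := by
    have := Matrix.ext_iff.2 hM 0 0
    simpa [Matrix.mul_apply, Fin.sum_univ_two, Matrix.star_apply] using this
  have h01 : M 0 0 * M 1 0 + M 0 1 * M 1 1 = 0 := by
    have := Matrix.ext_iff.2 hM 0 1
    simpa [Matrix.mul_apply, Fin.sum_univ_two, Matrix.star_apply] using this
  have hd : M 0 0 * M 1 1 - M 0 1 * M 1 0 = 1 := by
    simpa [Matrix.det_fin_two] using hdM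
  refine ⟨?_, ?_⟩
  · linear_combination M 0 0 * hd + M 0 1 * h01 - M 1 1 * h00
  · linear_combination M 0 0 * h01 - M 0 1 * hd - M 1 0 * h00

private lemma so2_comm (M N : Matrix (Fin 2) (Fin 2) ℝ)
    (hM : M * star M = 1) (hdM : M.det = 1)
    (hN : N * star N = 1) (hdN : N.det = 1) : M * N = N * M := by
  obtain ⟨hm1, hm2⟩ := so2_entries M hM hdM
  obtain ⟨hn1, hn2⟩ := so2_entries N hN hdN
  ext i j
  fin_cases i <;> fin_cases j <;>
    simp [Matrix.mul_apply, Fin.sum_univ_two, hm1, hm2, hn1, hn2] <;> ring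

/-- A finite group `G` embedding into `O(2) × O(2) × O(2)` whose Fitting
subgroup is cyclic (expressed as: some cyclic normal subgroup `N` contains every nilpotent
normal subgroup of `G`) belongs to the family `𝒢₁²`: it has a cyclic normal subgroup `H`
with `G/H` a 2-group. -/


theorem stmt5 {G : Type*} [Group G] [Finite G]
    (f : G →* Matrix.orthogonalGroup (Fin 2) ℝ × Matrix.orthogonalGroup (Fin 2) ℝ ×
      Matrix.orthogonalGroup (Fin 2) ℝ)
    (hf : Function.Injective f)
    (N : Subgroup G) (hN : N.Normal) (hNcyc : IsCyclic N)
    (hNmax : ∀ M : Subgroup G, M.Normal → Group.IsNilpotent M → M ≤ N) :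
    ∃ (H : Subgroup G) (_ : H.Normal), IsCyclic H ∧ IsPGroup 2 (G ⧸ H) := by
  classical
  -- determinant squared is 1 for orthogonal matrices
  have sq : ∀ x : Matrix.orthogonalGroup (Fin 2) ℝ, (x : Matrix (Fin 2) (Fin 2) ℝ).det *
      (x : Matrix (Fin 2) (Fin 2) ℝ).det = 1 := by
    intro x
    have h := congrArg Matrix.det (Unitary.mul_star_self_of_mem x.2)
    rwa [Matrix.det_mul, Matrix.star_eq_conjTranspose, Matrix.det_conjTranspose,
      star_trivial, Matrix.det_one] at h
  -- the three determinant monoid homs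
  let d1 : G →* ℝ := Matrix.detMonoidHom.comp ((Submonoid.subtype _).comp
    ((MonoidHom.fst _ _).comp f))
  let d2 : G →* ℝ := Matrix.detMonoidHom.comp ((Submonoid.subtype _).comp
    ((MonoidHom.fst _ _).comp ((MonoidHom.snd _ _).comp f)))
  let d3 : G →* ℝ := Matrix.detMonoidHom.comp ((Submonoid.subtype _).comp
    ((MonoidHom.snd _ _).comp ((MonoidHom.snd _ _).comp f)))
  have hd1 : ∀ g, d1 g = ((f g).1 : Matrix (Fin 2) (Fin 2) ℝ).det := fun _ => rfl
  have hd2 : ∀ g, d2 g = ((f g).2.1 : Matrix (Fin 2) (Fin 2) ℝ).det := fun _ => rfl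
  have hd3 : ∀ g, d3 g = ((f g).2.2 : Matrix (Fin 2) (Fin 2) ℝ).det := fun _ => rfl
  have sqg : ∀ g : G, d1 (g * g) = 1 ∧ d2 (g * g) = 1 ∧ d3 (g * g) = 1 := by
    intro g
    refine ⟨?_, ?_, ?_⟩ <;> rw [_root_.map_mul]
    · exact sq (f g).1
    · exact sq (f g).2.1
    · exact sq (f g).2.2
  let A : Subgroup G :=
  { carrier := {g | d1 g = 1 ∧ d2 g = 1 ∧ d3 g = 1}
    one_mem' := by simp
    mul_mem' := fun {a b} ha hb => by
      refine ⟨?_, ?_, ?_⟩ <;> rw [_root_.map_mul]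
      · rw [ha.1, hb.1, one_mul]
      · rw [ha.2.1, hb.2.1, one_mul]
      · rw [ha.2.2, hb.2.2, one_mul]
    inv_mem' := fun {a} ha => by
      have h1 : d1 a⁻¹ * d1 a = 1 := by rw [← _root_.map_mul, inv_mul_cancel, _root_.map_one]
      have h2 : d2 a⁻¹ * d2 a = 1 := by rw [← _root_.map_mul, inv_mul_cancel, _root_.map_one]
      have h3 : d3 a⁻¹ * d3 a = 1 := by rw [← _root_.map_mul, inv_mul_cancel, _root_.map_one]
      rw [ha.1, mul_one] at h1
      rw [ha.2.1, mul_one] at h2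
      rw [ha.2.2, mul_one] at h3
      exact ⟨h1, h2, h3⟩ }
  have hAmem : ∀ g : G, g ∈ A ↔ d1 g = 1 ∧ d2 g = 1 ∧ d3 g = 1 := fun g => Iff.rfl
  haveI hAnorm : A.Normal := by
    constructor
    intro a ha g
    have conj : ∀ d : G →* ℝ, d a = 1 → d (g * a * g⁻¹) = 1 := by
      intro d hda
      rw [_root_.map_mul, _root_.map_mul, hda, mul_one, ← _root_.map_mul, mul_inv_cancel, _root_.map_one]
    exact ⟨conj d1 ha.1, conj d2 ha.2.1, conj d3 ha.2.2⟩
  -- A is commutative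
  have key : ∀ a ∈ A, ∀ b ∈ A, a * b = b * a := by
    intro a ha b hb
    apply hf
    rw [_root_.map_mul, _root_.map_mul]
    have c1 := so2_comm _ _ (Unitary.mul_star_self_of_mem (f a).1.prop) ha.1
      (Unitary.mul_star_self_of_mem (f b).1.prop) hb.1
    have c2 := so2_comm _ _ (Unitary.mul_star_self_of_mem (f a).2.1.prop) ha.2.1
      (Unitary.mul_star_self_of_mem (f b).2.1.prop) hb.2.1
    have c3 := so2_comm _ _ (Unitary.mul_star_self_of_mem (f a).2.2.prop) ha.2.2
      (Unitary.mul_star_self_of_mem (f b).2.2.prop) hb.2.2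
    exact Prod.ext (Subtype.ext c1) (Prod.ext (Subtype.ext c2) (Subtype.ext c3))
  have hAnil : Group.IsNilpotent ↥A := by
    letI : CommGroup ↥A :=
      { (inferInstance : Group ↥A) with
        mul_comm := fun x y => Subtype.ext (key x.1 x.2 y.1 y.2) }
    infer_instance
  have hAN : A ≤ N := hNmax A hAnorm hAnil
  -- G ⧸ A is a 2-group
  have hpA : IsPGroup 2 (G ⧸ A) := by
    intro q
    refine ⟨1, ?_⟩
    obtain ⟨g, rfl⟩ := QuotientGroup.mk_surjective q
    have : ((g : G ⧸ A) : G ⧸ A) ^ (2 : ℕ) = ((g * g : G) : G ⧸ A) := by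
      rw [pow_two]; rfl
    rw [pow_one, this, QuotientGroup.eq_one_iff]
    exact sqg g
  haveI := hN
  refine ⟨N, hN, hNcyc, ?_⟩
  have hsurj : Function.Surjective
      (QuotientGroup.map A N (MonoidHom.id G) (fun x hx => hAN hx)) := by
    intro q
    obtain ⟨g, rfl⟩ := QuotientGroup.mk_surjective q
    exact ⟨(g : G ⧸ A), rfl⟩
  exact hpA.of_surjective _ hsurj
end

section
/- Let G be a finite group admitting an injective group homomorphism into SO(3) × SO(3), where SO(3) = Matrix.specialOrthogonalGroup (Fin 3) ℝ. Suppose there exists a cyclic normal subgroup N of G containing every nilpotent normal subgroup of G (i.e., the Fitting subgroup F(G) is cyclic), and suppose G is solvable. Then G has a cyclic normal subgroup H such that the quotient group G/H is a 2-group (i.e., G belongs to the family 𝒢₁²). -/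
open Polynomial Matrix
open scoped commutatorElement

section aux
variable {m : Type*} [Fintype m] [DecidableEq m]

lemma stmt7_pow_mulVec {B : Matrix m m ℂ} {v : m → ℂ} {μ : ℂ}
    (h : B.mulVec v = μ • v) (i : ℕ) : (B ^ i).mulVec v = μ ^ i • v := by
  induction i with
  | zero => simp [Matrix.one_mulVec]
  | succ i ih =>
    rw [pow_succ', pow_succ', ← Matrix.mulVec_mulVec, ih, Matrix.mulVec_smul, h, smul_smul]
    ring_nf

lemma stmt7_scalar_mulVec {μ : ℂ} {v : m → ℂ} : (Matrix.scalar m μ).mulVec v = μ • v := by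
  have : Matrix.scalar m μ = μ • (1 : Matrix m m ℂ) := by
    rw [Matrix.scalar_apply, Matrix.smul_one_eq_diagonal]
  rw [this, Matrix.smul_mulVec, Matrix.one_mulVec]

lemma stmt7_isRoot_charpoly_iff {B : Matrix m m ℂ} {μ : ℂ} :
    (Matrix.charpoly B).IsRoot μ ↔ ∃ v, v ≠ 0 ∧ B.mulVec v = μ • v := by
  have h1 : (Matrix.charpoly B).eval μ = (Matrix.scalar m μ - B).det := by
    rw [Matrix.charpoly, eval_det, Matrix.matPolyEquiv_charmatrix]
    simp
  rw [Polynomial.IsRoot, h1, ← Matrix.exists_mulVec_eq_zero_iff]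
  constructor
  · rintro ⟨v, hv, h⟩
    refine ⟨v, hv, ?_⟩
    rw [Matrix.sub_mulVec, stmt7_scalar_mulVec] at h
    linear_combination (norm := module) -h
  · rintro ⟨v, hv, h⟩
    refine ⟨v, hv, ?_⟩
    rw [Matrix.sub_mulVec, h, stmt7_scalar_mulVec, sub_self]

lemma stmt7_aux_dvd {B : Matrix m m ℂ} {n : ℕ} (hn : n ≠ 0) (hB : B ^ n = 1)
    {g : ℂ[X]} (hg : g ≠ 0) (h : ∀ x : ℂ, (Matrix.charpoly B).IsRoot x → g.IsRoot x) :
    Polynomial.aeval B g = 0 := by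
  have hint : IsIntegral ℂ B := ⟨X ^ n - 1, by
    simpa using Polynomial.monic_X_pow_sub_C (1 : ℂ) hn, by
    simp [Polynomial.eval₂_sub, hB]⟩
  set p := minpoly ℂ B with hp
  have hpdvd : p ∣ X ^ n - 1 := minpoly.dvd ℂ B (by simp [hB])
  have hXn : (X ^ n - 1 : ℂ[X]).Separable := by
    simpa using Polynomial.separable_X_pow_sub_C (1 : ℂ) (by exact_mod_cast hn) one_ne_zero
  have hsep : p.Separable := hXn.of_dvd hpdvd
  have hmonic : p.Monic := minpoly.monic hint
  have hpc : p ∣ Matrix.charpoly B := minpoly.dvd ℂ B (Matrix.aeval_self_charpoly B)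
  have hrootsg : ∀ x ∈ p.roots, x ∈ g.roots := by
    intro x hx
    have hroot : p.IsRoot x := Polynomial.isRoot_of_mem_roots hx
    exact Polynomial.mem_roots'.mpr ⟨hg, h x (hroot.dvd hpc)⟩
  have hnodup : p.roots.Nodup := Polynomial.nodup_roots hsep
  have hle : p.roots ≤ g.roots := by
    rw [Multiset.le_iff_count]
    intro a
    by_cases ha : a ∈ p.roots
    · calc p.roots.count a ≤ 1 := Multiset.nodup_iff_count_le_one.mp hnodup a
        _ ≤ g.roots.count a := Multiset.one_le_count_iff_mem.mpr (hrootsg a ha)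
    · simp [Multiset.count_eq_zero_of_notMem ha]
  have hpfac : p = (p.roots.map fun a => X - C a).prod :=
    (IsAlgClosed.splits p).eq_prod_roots_of_monic hmonic
  have hdvd : p ∣ g := by
    rw [hpfac]
    exact (Multiset.prod_dvd_prod_of_le (Multiset.map_le_map hle)).trans
      (Polynomial.prod_multiset_X_sub_C_dvd g)
  obtain ⟨q, hq⟩ := hdvd
  rw [hq, _root_.map_mul, minpoly.aeval, zero_mul]

end aux

/-- Key geometric fact. -/
lemma stmt7_key {A M M' : Matrix (Fin 3) (Fin 3) ℝ} {n k : ℕ} (hn : n ≠ 0)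
    (hA : A ^ n = 1) (hdet : A.det = 1) (hMM' : M * M' = 1) (hM'M : M' * M = 1)
    (hconj : M * A * M' = A ^ k) : A ^ k = A ∨ A ^ (k + 1) = 1 := by
  have hA1 : A ^ k = 1 → A = 1 := by
    intro h1
    have h2 : M' * (M * A * M') * M = A := by
      rw [show M' * (M * A * M') * M = (M' * M) * A * (M' * M) by noncomm_ring, hM'M,
        one_mul, mul_one]
    rw [hconj, h1] at h2
    rw [← h2, mul_one, hM'M]
  rcases eq_or_ne k 0 with rfl | hk0
  · right
    rw [pow_zero] at hconj
    rw [zero_add, pow_one, hA1 (by rw [pow_zero])]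
  rcases eq_or_ne k 1 with rfl | hk1
  · left; rw [pow_one]
  -- move to ℂ
  set ψ : Matrix (Fin 3) (Fin 3) ℝ →+* Matrix (Fin 3) (Fin 3) ℂ :=
    (algebraMap ℝ ℂ).mapMatrix with hψdef
  have hψ : Function.Injective ψ := fun X Y h => by
    ext i j
    exact Complex.ofReal_inj.mp (congrFun (congrFun h i) j)
  set B : Matrix (Fin 3) (Fin 3) ℂ := ψ A with hBdef
  have hBn : B ^ n = 1 := by rw [← _root_.map_pow, hA, _root_.map_one]
  have hdetB : B.det = 1 := by
    rw [hBdef, hψdef, ← RingHom.map_det, hdet, _root_.map_one]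
  have hchar0 : Matrix.charpoly B ≠ 0 := (Matrix.charpoly_monic B).ne_zero
  set r := (Matrix.charpoly B).roots with hrdef
  have hcard : Multiset.card r = 3 := by
    have h1 : Multiset.card r = (Matrix.charpoly B).natDegree :=
      (Polynomial.splits_iff_card_roots).mp (IsAlgClosed.splits _)
    rw [h1, Matrix.charpoly_natDegree_eq_dim, Fintype.card_fin]
  have hprodr : r.prod = 1 := by rw [hrdef, ← Matrix.det_eq_prod_roots_charpoly, hdetB]
  -- each root gives an eigenvector
  have heig : ∀ z ∈ r, ∃ v, v ≠ 0 ∧ B.mulVec v = z • v := fun z hz =>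
    stmt7_isRoot_charpoly_iff.mp (Polynomial.isRoot_of_mem_roots hz)
  have hmem_pow : ∀ z ∈ r, z ^ n = 1 := by
    intro z hz
    obtain ⟨v, hv0, hv⟩ := heig z hz
    have h1 := stmt7_pow_mulVec hv n
    rw [hBn, Matrix.one_mulVec] at h1
    have h2 : (z ^ n - 1) • v = 0 := by rw [sub_smul, one_smul, ← h1, sub_self]
    rcases smul_eq_zero.mp h2 with h3 | h3
    · exact sub_eq_zero.mp h3
    · exact absurd h3 hv0
  have hmem_k : ∀ z ∈ r, z ^ k ∈ r := by
    intro z hz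
    obtain ⟨v, hv0, hv⟩ := heig z hz
    have hconjB : ψ M * B * ψ M' = B ^ k := by
      rw [hBdef, ← _root_.map_mul, ← _root_.map_mul, hconj, _root_.map_pow]
    have hMM'B : ψ M * ψ M' = 1 := by rw [← _root_.map_mul, hMM', _root_.map_one]
    have hM'MB : ψ M' * ψ M = 1 := by rw [← _root_.map_mul, hM'M, _root_.map_one]
    set u := (ψ M').mulVec v with hudef
    have hu0 : u ≠ 0 := by
      intro h0
      apply hv0
      have : (ψ M).mulVec u = v := by
        rw [hudef, Matrix.mulVec_mulVec, hMM'B, Matrix.one_mulVec]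
      rw [h0, Matrix.mulVec_zero] at this
      exact this.symm
    have heq : B * ψ M' = ψ M' * B ^ k := by
      calc B * ψ M' = (ψ M' * ψ M) * B * ψ M' := by rw [hM'MB, one_mul]
        _ = ψ M' * (ψ M * B * ψ M') := by noncomm_ring
        _ = ψ M' * B ^ k := by rw [hconjB]
    have hBu : B.mulVec u = z ^ k • u := by
      rw [hudef, Matrix.mulVec_mulVec, heq, ← Matrix.mulVec_mulVec,
        stmt7_pow_mulVec hv k, Matrix.mulVec_smul]
    exact Polynomial.mem_roots'.mpr ⟨hchar0, stmt7_isRoot_charpoly_iff.mpr ⟨u, hu0, hBu⟩⟩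
  have hconjmem : ∀ z ∈ r, (starRingEnd ℂ) z ∈ r := by
    intro z hz
    have hmap : Matrix.charpoly B = (Matrix.charpoly A).map (algebraMap ℝ ℂ) :=
      Matrix.charpoly_map A (algebraMap ℝ ℂ)
    have hroot : (Matrix.charpoly B).IsRoot z := Polynomial.isRoot_of_mem_roots hz
    refine Polynomial.mem_roots'.mpr ⟨hchar0, ?_⟩
    rw [hmap] at hroot ⊢
    have h1 : ((Matrix.charpoly A).map (algebraMap ℝ ℂ)).eval ((starRingEnd ℂ) z)
        = (starRingEnd ℂ) (((Matrix.charpoly A).map (algebraMap ℝ ℂ)).eval z) := by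
      rw [Polynomial.eval_map, Polynomial.eval_map, Polynomial.hom_eval₂]
      congr 1
      exact RingHom.ext fun x => (Complex.conj_ofReal x).symm
    rw [Polynomial.IsRoot, h1, hroot.eq_zero, map_zero]
  -- case split on whether all roots are real
  by_cases hreal : ∀ z ∈ r, (starRingEnd ℂ) z = z
  · -- all roots are ±1, so B² = 1
    have h2 : ∀ z ∈ r, z ^ 2 = 1 := by
      intro z hz
      obtain ⟨x, hx⟩ := Complex.conj_eq_iff_real.mp (hreal z hz)
      have hxn : (x : ℝ) ^ n = 1 := by
        have := hmem_pow z hz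
        rw [hx] at this
        exact_mod_cast this
      rcases pow_eq_one_iff_cases.mp hxn with h | h | h
      · exact absurd h hn
      · rw [hx, h]; norm_num
      · rw [hx, h.1]; push_cast; ring
    have hB2 : B ^ 2 = 1 := by
      have := stmt7_aux_dvd hn hBn (g := X ^ 2 - 1)
        (by simpa using Polynomial.X_pow_sub_C_ne_zero (by norm_num : 0 < 2) (1 : ℂ)) ?_
      · rw [_root_.map_sub, _root_.map_one, _root_.map_pow, Polynomial.aeval_X,
          sub_eq_zero] at this
        exact this
      · intro x hx
        have hxr : x ∈ r := Polynomial.mem_roots'.mpr ⟨hchar0, hx⟩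
        simp [Polynomial.IsRoot, h2 x hxr]
    have hA2 : A ^ 2 = 1 := hψ (by rw [_root_.map_pow, _root_.map_one]; exact hB2)
    rcases Nat.even_or_odd k with ⟨t, ht⟩ | ⟨t, ht⟩
    · left
      have : A ^ k = 1 := by
        rw [ht, show t + t = 2 * t by ring, pow_mul, hA2, one_pow]
      rw [this, hA1 this]
    · left
      rw [ht, pow_succ, pow_mul, hA2, one_pow, one_mul]
  · push_neg at hreal
    obtain ⟨z, hz, hzne⟩ := hreal
    have habs : ‖z‖ = 1 := by
      have h := congrArg norm (hmem_pow z hz)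
      rw [norm_pow] at h
      exact pow_left_inj₀ (by positivity) zero_le_one hn |>.mp (by simpa using h)
    have hzz : z * (starRingEnd ℂ) z = 1 := by
      rw [Complex.mul_conj, Complex.normSq_eq_norm_sq, habs]
      norm_num
    -- r = {z, conj z, 1}
    have hz' : (starRingEnd ℂ) z ∈ r := hconjmem z hz
    have h1 : (starRingEnd ℂ) z ∈ r.erase z := (Multiset.mem_erase_of_ne hzne).mpr hz'
    have e1 : r = z ::ₘ r.erase z := (Multiset.cons_erase hz).symm
    have e2 : r.erase z = (starRingEnd ℂ) z ::ₘ (r.erase z).erase ((starRingEnd ℂ) z) :=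
      (Multiset.cons_erase h1).symm
    obtain ⟨w, hw⟩ : ∃ w, (r.erase z).erase ((starRingEnd ℂ) z) = {w} := by
      apply Multiset.card_eq_one.mp
      have c1 : Multiset.card (r.erase z) = 2 := by
        rw [Multiset.card_erase_of_mem hz, hcard]; rfl
      rw [Multiset.card_erase_of_mem h1, c1]; rfl
    have hrfull : r = z ::ₘ (starRingEnd ℂ) z ::ₘ {w} := by rw [e1, e2, hw]
    have hw1 : w = 1 := by
      have := hprodr
      rw [hrfull, Multiset.prod_cons, Multiset.prod_cons, Multiset.prod_singleton,
        ← mul_assoc, hzz, one_mul] at this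
      exact this
    have hmemr : ∀ x ∈ r, x = z ∨ x = (starRingEnd ℂ) z ∨ x = 1 := by
      intro x hx
      rw [hrfull, hw1] at hx
      simpa using hx
    have hz1 : z ≠ 1 := fun h => hzne (by rw [h, _root_.map_one])
    -- where does z^k go?
    rcases hmemr _ (hmem_k z hz) with hcase | hcase | hcase
    · -- z^k = z : show A^k = A
      left
      have hBk : B ^ k = B := by
        have := stmt7_aux_dvd hn hBn (g := X ^ k - X) ?_ ?_
        · rw [_root_.map_sub, _root_.map_pow, Polynomial.aeval_X, sub_eq_zero] at this
          exact this
        · intro h0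
          have := congrArg (fun p => Polynomial.coeff p k) h0
          simp [Polynomial.coeff_X_pow, Polynomial.coeff_X, hk1, Ne.symm hk1] at this
        · intro x hx
          have hxr : x ∈ r := Polynomial.mem_roots'.mpr ⟨hchar0, hx⟩
          rcases hmemr x hxr with h | h | h
          · simp [Polynomial.IsRoot, h, hcase]
          · simp [Polynomial.IsRoot, h, ← map_pow, hcase]
          · simp [Polynomial.IsRoot, h]
      exact hψ (by rw [_root_.map_pow]; exact hBk)
    · -- z^k = conj z : show A^(k+1) = 1
      right
      have hBk : B ^ (k + 1) = 1 := by
        have := stmt7_aux_dvd hn hBn (g := X ^ (k + 1) - 1)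
          (by simpa using Polynomial.X_pow_sub_C_ne_zero (Nat.succ_pos k) (1 : ℂ)) ?_
        · rw [_root_.map_sub, _root_.map_one, _root_.map_pow, Polynomial.aeval_X,
            sub_eq_zero] at this
          exact this
        · intro x hx
          have hxr : x ∈ r := Polynomial.mem_roots'.mpr ⟨hchar0, hx⟩
          have hzk1 : z ^ (k + 1) = 1 := by
            rw [pow_succ, hcase, mul_comm, hzz]
          rcases hmemr x hxr with h | h | h
          · simp [Polynomial.IsRoot, h, hzk1]
          · simp [Polynomial.IsRoot, h, ← map_pow, hzk1]
          · simp [Polynomial.IsRoot, h]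
      exact hψ (by rw [_root_.map_pow, _root_.map_one]; exact hBk)
    · -- z^k = 1 : contradiction
      exfalso
      have hBk : B ^ k = 1 := by
        have := stmt7_aux_dvd hn hBn (g := X ^ k - 1)
          (by simpa using Polynomial.X_pow_sub_C_ne_zero (Nat.pos_of_ne_zero hk0) (1 : ℂ)) ?_
        · rw [_root_.map_sub, _root_.map_one, _root_.map_pow, Polynomial.aeval_X,
            sub_eq_zero] at this
          exact this
        · intro x hx
          have hxr : x ∈ r := Polynomial.mem_roots'.mpr ⟨hchar0, hx⟩
          rcases hmemr x hxr with h | h | h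
          · simp [Polynomial.IsRoot, h, hcase]
          · simp [Polynomial.IsRoot, h, ← map_pow, hcase]
          · simp [Polynomial.IsRoot, h]
      have hAk : A ^ k = 1 := hψ (by rw [_root_.map_pow, _root_.map_one]; exact hBk)
      have hAone : A = 1 := hA1 hAk
      have hBone : B = 1 := by rw [hBdef, hAone, _root_.map_one]
      obtain ⟨v, hv0, hv⟩ := heig z hz
      rw [hBone, Matrix.one_mulVec] at hv
      have : (z - 1) • v = 0 := by rw [sub_smul, one_smul, ← hv, sub_self]
      rcases smul_eq_zero.mp this with h3 | h3
      · exact hz1 (sub_eq_zero.mp h3)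
      · exact absurd h3 hv0


section grp

lemma stmt7_conj_pow {R : Type*} [Ring R] {M M' A : R} (hMM' : M * M' = 1)
    (hM'M : M' * M = 1) (j : ℕ) : M * A ^ j * M' = (M * A * M') ^ j := by
  induction j with
  | zero => simp [hMM']
  | succ j ih =>
    rw [pow_succ, pow_succ, ← ih]
    calc M * (A ^ j * A) * M'
        = (M * A ^ j) * (M' * M) * (A * M') := by rw [hM'M]; noncomm_ring
      _ = (M * A ^ j * M') * (M * A * M') := by noncomm_ring

lemma stmt7_comm_ne {Q : Type*} [Group Q] [Group.IsSolvable Q] {K : Subgroup Q}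
    (h : ⁅K, K⁆ = K) : K = ⊥ := by
  have hmap : ∀ i, Subgroup.map K.subtype (derivedSeries ↥K i) = K := by
    intro i
    induction i with
    | zero =>
      rw [derivedSeries_zero, ← MonoidHom.range_eq_map]
      exact K.range_subtype
    | succ i ih => rw [derivedSeries_succ, Subgroup.map_commutator, ih, h]
  obtain ⟨nn, hnn⟩ := (inferInstance : Group.IsSolvable ↥K).solvable
  have := hmap nn
  rw [hnn, Subgroup.map_bot] at this
  exact this.symm

end grp


/-- A solvable finite group `G` embedding into `SO(3) × SO(3)` whose Fitting
subgroup is cyclic belongs to the family `𝒢₁²`: it has a cyclic normal subgroup `H` with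
`G/H` a 2-group. -/
theorem stmt7 {G : Type*} [Group G] [Finite G]
    (f : G →* Matrix.specialOrthogonalGroup (Fin 3) ℝ ×
      Matrix.specialOrthogonalGroup (Fin 3) ℝ)
    (hf : Function.Injective f)
    (N : Subgroup G) (hN : N.Normal) (hNcyc : IsCyclic N)
    (hNmax : ∀ M : Subgroup G, M.Normal → Group.IsNilpotent M → M ≤ N)
    (hs : IsSolvable G) :
    ∃ (H : Subgroup G) (_ : H.Normal), IsCyclic H ∧ IsPGroup 2 (G ⧸ H) := by
  haveI := hN
  haveI : Group.IsSolvable G := hs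
  classical
  set C := Subgroup.centralizer (N : Set G) with hCdef
  have hNleC : N ≤ C := by
    intro x hx
    rw [Subgroup.mem_centralizer_iff]
    intro y hy
    letI := hNcyc.commGroup
    exact congrArg Subtype.val (mul_comm (⟨y, hy⟩ : N) (⟨x, hx⟩ : N))
  have hCnormal : C.Normal := by
    constructor
    intro c hc g
    rw [hCdef, Subgroup.mem_centralizer_iff] at hc ⊢
    intro y hy
    have hy' : g⁻¹ * y * g ∈ N := by simpa using hN.conj_mem y hy g⁻¹
    have h2 := hc _ hy'
    calc y * (g * c * g⁻¹) = g * ((g⁻¹ * y * g) * c) * g⁻¹ := by group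
      _ = g * (c * (g⁻¹ * y * g)) * g⁻¹ := by rw [h2]
      _ = (g * c * g⁻¹) * y := by group
  -- C ≤ N via Fitting argument
  have hCleN : C ≤ N := by
    by_contra hnot
    set π := QuotientGroup.mk' N with hπdef
    have hπsurj : Function.Surjective π := QuotientGroup.mk'_surjective N
    haveI : Finite (G ⧸ N) := Quotient.finite _
    set Cb := Subgroup.map π C with hCbdef
    have hCb : Cb ≠ ⊥ := by
      intro h0
      apply hnot
      intro c hc
      have h1 : π c ∈ Cb := Subgroup.mem_map_of_mem π hc
      rw [h0, Subgroup.mem_bot] at h1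
      exact (QuotientGroup.eq_one_iff c).mp h1
    haveI hCbn : Cb.Normal := hCnormal.map π hπsurj
    obtain ⟨Mb, hMbS, hmin⟩ := (Finite.to_wellFoundedLT (α := Subgroup (G ⧸ N))).wf.has_min
      {K : Subgroup (G ⧸ N) | K ≠ ⊥ ∧ K.Normal ∧ K ≤ Cb} ⟨Cb, hCb, hCbn, le_rfl⟩
    obtain ⟨hMbne, hMbnormal, hMbleCb⟩ := hMbS
    haveI := hMbnormal
    have hcomm_bot : ⁅Mb, Mb⁆ = ⊥ := by
      by_contra hKne
      have hle : ⁅Mb, Mb⁆ ≤ Mb := Subgroup.commutator_le_left Mb Mb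
      have hlt : ⁅Mb, Mb⁆ < Mb :=
        lt_of_le_of_ne hle (fun heq => hMbne (stmt7_comm_ne heq))
      exact hmin ⁅Mb, Mb⁆ ⟨hKne, inferInstance, hle.trans hMbleCb⟩ hlt
    have hMbcomm : ∀ a b : G ⧸ N, a ∈ Mb → b ∈ Mb → a * b = b * a := by
      intro a b ha hb
      have h1 : ⁅a, b⁆ ∈ ⁅Mb, Mb⁆ := Subgroup.commutator_mem_commutator ha hb
      rw [hcomm_bot, Subgroup.mem_bot, commutatorElement_eq_one_iff_mul_comm] at h1
      exact h1
    set Msub := Subgroup.comap π Mb with hMsubdef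
    have hMnormal : Msub.Normal := hMbnormal.comap π
    have hNleM : N ≤ Msub := by
      intro x hx
      have h1 : π x = 1 := (QuotientGroup.eq_one_iff x).mpr hx
      show π x ∈ Mb
      rw [h1]
      exact Mb.one_mem
    have hMleC : Msub ≤ C := by
      have h1 : Subgroup.comap π Cb = C := by
        rw [hCbdef, Subgroup.comap_map_eq, QuotientGroup.ker_mk']
        exact sup_eq_left.mpr hNleC
      rw [← h1]
      exact Subgroup.comap_mono hMbleCb
    have hnil : Group.IsNilpotent ↥Msub := by
      set φ := π.domRestrict Msub with hφdef
      have hrange : ∀ x : G ⧸ N, x ∈ φ.range → x ∈ Mb := by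
        rintro x ⟨⟨g, hgM⟩, rfl⟩
        exact hgM
      letI : CommGroup ↥φ.range :=
        { (inferInstance : Group ↥φ.range) with
          mul_comm := fun a b =>
            Subtype.ext (hMbcomm _ _ (hrange _ a.2) (hrange _ b.2)) }
      refine isNilpotent_of_ker_le_center φ.rangeRestrict ?_
      intro x hx
      rw [MonoidHom.ker_rangeRestrict, MonoidHom.mem_ker] at hx
      have hx' : ((x : G) : G ⧸ N) = 1 := hx
      have hxN : (x : G) ∈ N := (QuotientGroup.eq_one_iff _).mp hx'
      rw [Subgroup.mem_center_iff]
      intro m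
      apply Subtype.ext
      have hmC : (m : G) ∈ C := hMleC m.2
      rw [Subgroup.mem_centralizer_iff] at hmC
      exact (hmC _ hxN).symm
    have hMleN : Msub ≤ N := hNmax Msub hMnormal hnil
    apply hMbne
    have h2 : Mb = Subgroup.map π Msub :=
      (Subgroup.map_comap_eq_self_of_surjective hπsurj Mb).symm
    rw [h2, eq_bot_iff]
    rintro x ⟨g, hg, rfl⟩
    rw [Subgroup.mem_bot]
    exact (QuotientGroup.eq_one_iff g).mpr (hMleN hg)
  have hCN : C = N := le_antisymm hCleN hNleC
  -- generator of N
  obtain ⟨⟨y, hyN⟩, hgen⟩ := hNcyc.exists_generator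
  set n := orderOf y with hndef
  have hn0 : n ≠ 0 := (orderOf_pos y).ne'
  have hyn : y ^ n = 1 := pow_orderOf_eq_one y
  have hsq : ∀ g : G, g ^ 2 ∈ C := by
    intro g
    have hc : g * y * g⁻¹ ∈ N := hN.conj_mem y hyN g
    obtain ⟨m, hm⟩ := hgen ⟨g * y * g⁻¹, hc⟩
    have hm' : y ^ m = g * y * g⁻¹ := by
      have h1 := congrArg Subtype.val hm
      simpa using h1
    set k : ℕ := (m % (n : ℤ)).toNat with hkdef
    have h0 : (0 : ℤ) ≤ m % (n : ℤ) := Int.emod_nonneg m (by exact_mod_cast hn0)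
    have hmn : y ^ m = y ^ (k : ℕ) := by
      conv_lhs => rw [← Int.emod_add_mul_ediv m (n : ℤ)]
      rw [_root_.zpow_add, _root_.zpow_mul, _root_.zpow_natCast, hyn, _root_.one_zpow, mul_one, ← _root_.zpow_natCast,
        hkdef, Int.toNat_of_nonneg h0]
    have hky : g * y * g⁻¹ = y ^ k := by rw [← hm', hmn]
    have hcomp : ∀ Φ : G →* Matrix (Fin 3) (Fin 3) ℝ, (Φ y).det = 1 →
        Φ (g ^ 2 * y * (g ^ 2)⁻¹) = Φ y := by
      intro Φ hdet
      have hAn : (Φ y) ^ n = 1 := by rw [← _root_.map_pow, hyn, _root_.map_one]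
      have hMM' : Φ g * Φ g⁻¹ = 1 := by rw [← _root_.map_mul, mul_inv_cancel, _root_.map_one]
      have hM'M : Φ g⁻¹ * Φ g = 1 := by rw [← _root_.map_mul, inv_mul_cancel, _root_.map_one]
      have hconjm : Φ g * Φ y * Φ g⁻¹ = (Φ y) ^ k := by
        rw [← _root_.map_mul, ← _root_.map_mul, hky, _root_.map_pow]
      have hexpr : Φ (g ^ 2 * y * (g ^ 2)⁻¹) = Φ g * (Φ g * Φ y * Φ g⁻¹) * Φ g⁻¹ := by
        have h2 : g ^ 2 * y * (g ^ 2)⁻¹ = g * (g * y * g⁻¹) * g⁻¹ := by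
          rw [pow_two, _root_.mul_inv_rev]
          group
        rw [h2, _root_.map_mul, _root_.map_mul, _root_.map_mul, _root_.map_mul]
      rcases stmt7_key hn0 hAn hdet hMM' hM'M hconjm with hcase | hcase
      · rw [hexpr, hconjm, hcase, hconjm]
        exact hcase
      · rcases Nat.eq_zero_or_pos k with hk0 | hkpos
        · have hA1 : Φ y = 1 := by
            rw [hk0, zero_add, pow_one] at hcase
            exact hcase
          rw [hexpr, hconjm, hk0, pow_zero, mul_one, hMM', hA1]
        · obtain ⟨j, hj⟩ : ∃ j, k = j + 1 := ⟨k - 1, by omega⟩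
          calc Φ (g ^ 2 * y * (g ^ 2)⁻¹) = Φ g * (Φ y) ^ k * Φ g⁻¹ := by rw [hexpr, hconjm]
            _ = (Φ g * Φ y * Φ g⁻¹) ^ k := stmt7_conj_pow hMM' hM'M k
            _ = ((Φ y) ^ k) ^ k := by rw [hconjm]
            _ = (Φ y) ^ (k * k) := by rw [← pow_mul]
            _ = ((Φ y) ^ (k + 1)) ^ j * Φ y := by
                rw [← pow_mul, ← pow_succ]
                congr 1
                rw [hj]
                ring
            _ = Φ y := by rw [hcase, one_pow, one_mul]
    have hdet1 : (((f y).1 : Matrix (Fin 3) (Fin 3) ℝ)).det = 1 := by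
      have hmem := (f y).1.2
      rw [Matrix.mem_specialOrthogonalGroup_iff] at hmem
      exact hmem.2
    have hdet2 : (((f y).2 : Matrix (Fin 3) (Fin 3) ℝ)).det = 1 := by
      have hmem := (f y).2.2
      rw [Matrix.mem_specialOrthogonalGroup_iff] at hmem
      exact hmem.2
    have h1 := hcomp ((Matrix.specialOrthogonalGroup (Fin 3) ℝ).subtype.comp
      ((MonoidHom.fst _ _).comp f)) hdet1
    have h2 := hcomp ((Matrix.specialOrthogonalGroup (Fin 3) ℝ).subtype.comp
      ((MonoidHom.snd _ _).comp f)) hdet2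
    have hfy : f (g ^ 2 * y * (g ^ 2)⁻¹) = f y :=
      Prod.ext_iff.mpr ⟨Subtype.ext h1, Subtype.ext h2⟩
    have hyy : g ^ 2 * y * (g ^ 2)⁻¹ = y := hf hfy
    rw [Subgroup.mem_centralizer_iff]
    intro x hx
    obtain ⟨j, hj⟩ := hgen ⟨x, hx⟩
    have hj' : y ^ j = x := by simpa using congrArg Subtype.val hj
    have hcy : Commute (g ^ 2) y := by
      show g ^ 2 * y = y * g ^ 2
      calc g ^ 2 * y = (g ^ 2 * y * (g ^ 2)⁻¹) * g ^ 2 := by group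
        _ = y * g ^ 2 := by rw [hyy]
    have hcx : g ^ 2 * (y ^ j) = (y ^ j) * g ^ 2 := (hcy.zpow_right j).eq
    rw [hj'] at hcx
    exact hcx.symm
  refine ⟨N, hN, hNcyc, ?_⟩
  intro q
  obtain ⟨g, rfl⟩ := QuotientGroup.mk'_surjective N q
  refine ⟨1, ?_⟩
  have hg2 : g ^ 2 ∈ N := hCN ▸ hsq g
  show (QuotientGroup.mk' N g) ^ (2 ^ 1) = 1
  have h21 : (2 : ℕ) ^ 1 = 2 := by norm_num
  rw [h21, ← _root_.map_pow]
  exact (QuotientGroup.eq_one_iff _).mpr hg2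
end

section
/- Let G be a finite group and ρ : G →* O(3) an injective group homomorphism into the orthogonal group O(3) = Matrix.orthogonalGroup (Fin 3) ℝ such that the negative identity matrix −I is not in the range of ρ. Then there exists an injective group homomorphism from G into SO(3) = Matrix.specialOrthogonalGroup (Fin 3) ℝ (explicitly, g ↦ det(ρ(g)) · ρ(g) is such a homomorphism). -/
/-- If a finite group `G` embeds into `O(3)` with `-I` not in the range of the
embedding, then `G` embeds into `SO(3)` (via `g ↦ det (ρ g) • ρ g`). -/
theorem stmt10 {G : Type*} [Group G] [Finite G]
    (ρ : G →* Matrix.orthogonalGroup (Fin 3) ℝ)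
    (hρ : Function.Injective ρ)
    (hI : ∀ g : G, (ρ g : Matrix (Fin 3) (Fin 3) ℝ) ≠ -1) :
    ∃ φ : G →* Matrix.specialOrthogonalGroup (Fin 3) ℝ, Function.Injective φ := by
  have hsq : ∀ g : G, (ρ g : Matrix (Fin 3) (Fin 3) ℝ).det *
      (ρ g : Matrix (Fin 3) (Fin 3) ℝ).det = 1 := by
    intro g
    have h := (Matrix.mem_orthogonalGroup_iff (n := Fin 3) (R := ℝ)).mp (ρ g).2
    have := congrArg Matrix.det h
    simpa [Matrix.star_eq_conjTranspose, Matrix.det_mul] using this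
  have hdet : ∀ g : G, (ρ g : Matrix (Fin 3) (Fin 3) ℝ).det = 1 ∨
      (ρ g : Matrix (Fin 3) (Fin 3) ℝ).det = -1 := fun g =>
    mul_self_eq_one_iff.mp (hsq g)
  have hmem : ∀ g : G, ((ρ g : Matrix (Fin 3) (Fin 3) ℝ).det • (ρ g : Matrix (Fin 3) (Fin 3) ℝ))
      ∈ Matrix.specialOrthogonalGroup (Fin 3) ℝ := by
    intro g
    set d := (ρ g : Matrix (Fin 3) (Fin 3) ℝ).det with hd
    set A := (ρ g : Matrix (Fin 3) (Fin 3) ℝ) with hA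
    rw [Matrix.mem_specialOrthogonalGroup_iff]
    constructor
    · rw [Matrix.mem_orthogonalGroup_iff]
      have hA' := (Matrix.mem_orthogonalGroup_iff (n := Fin 3) (R := ℝ)).mp (ρ g).2
      rw [show (d • A).transpose = d • A.transpose by simp [Matrix.transpose_smul], smul_mul_smul_comm,
        hA', hsq g, one_smul]
    · rw [Matrix.det_smul]
      simp only [Fintype.card_fin]
      rw [show d ^ 3 * A.det = (d * d) * (d * d) by rw [← hd]; ring, hsq g, one_mul]
  refine ⟨{ toFun := fun g => ⟨(ρ g : Matrix (Fin 3) (Fin 3) ℝ).det •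
      (ρ g : Matrix (Fin 3) (Fin 3) ℝ), hmem g⟩, map_one' := ?_, map_mul' := ?_ }, ?_⟩
  · ext : 1
    simp
  · intro a b
    ext : 1
    push_cast
    rw [map_mul]
    push_cast
    rw [Matrix.det_mul, smul_mul_smul_comm, mul_smul]
  · rw [injective_iff_map_eq_one]
    intro g hg
    have hg' : (ρ g : Matrix (Fin 3) (Fin 3) ℝ).det • (ρ g : Matrix (Fin 3) (Fin 3) ℝ) = 1 := by
      exact congrArg Subtype.val hg
    rcases hdet g with h1 | h1
    · rw [h1, one_smul] at hg'
      apply hρ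
      rw [map_one]
      exact Subtype.ext hg'
    · exfalso
      apply hI g
      rw [h1] at hg'
      have := congrArg (fun M => (-1 : ℝ) • M) hg'
      simpa [smul_smul] using this
end

section
/- Let G be a finite group containing a normal subgroup H isomorphic to the alternating group A₅ such that the index of H in G is a prime number p. Then G is isomorphic to the symmetric group S₅ on 5 letters, or G is isomorphic to the direct product A₅ × Cₚ of A₅ with a cyclic group of order p. -/
open Equiv Equiv.Perm Subgroup

namespace Stmt11Aux

abbrev A5 : Subgroup (Perm (Fin 5)) := alternatingGroup (Fin 5)

def pa : Perm (Fin 5) := Equiv.swap 1 2 * Equiv.swap 3 4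
def pb : Perm (Fin 5) := Equiv.swap 0 1 * Equiv.swap 1 3

set_option maxRecDepth 40000 in
lemma hpa2 : pa ^ 2 = 1 := by decide
set_option maxRecDepth 40000 in
lemma hpa1 : pa ≠ 1 := by decide
set_option maxRecDepth 40000 in
lemma hpb3 : pb ^ 3 = 1 := by decide
set_option maxRecDepth 40000 in
lemma hpb1 : pb ≠ 1 := by decide
set_option maxRecDepth 40000 in
lemma hpab5 : (pa * pb) ^ 5 = 1 := by decide
set_option maxRecDepth 40000 in
lemma hpaA : pa ∈ A5 := mem_alternatingGroup.mpr (by decide)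
set_option maxRecDepth 40000 in
lemma hpbA : pb ∈ A5 := mem_alternatingGroup.mpr (by decide)

def c1 : Perm (Fin 5) := Equiv.swap 0 2 * Equiv.swap 0 1
def c2 : Perm (Fin 5) := Equiv.swap 2 4 * Equiv.swap 2 3

set_option maxRecDepth 40000 in
lemma hc1A : c1 ∈ A5 := mem_alternatingGroup.mpr (by decide)
set_option maxRecDepth 40000 in
lemma hc2A : c2 ∈ A5 := mem_alternatingGroup.mpr (by decide)

set_option maxHeartbeats 2000000 in
set_option maxRecDepth 40000 in
lemma centralizer_c : ∀ σ : Perm (Fin 5), σ * c1 = c1 * σ → σ * c2 = c2 * σ → σ = 1 := by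
  decide

def S1 : Finset (Perm (Fin 5)) := Finset.univ.filter (fun x => x ^ 2 = 1 ∧ x ≠ 1)
def S2 : Finset (Perm (Fin 5)) := Finset.univ.filter (fun y => y ^ 3 = 1 ∧ y ≠ 1)
def SP : Finset (Perm (Fin 5) × Perm (Fin 5)) :=
  (S1 ×ˢ S2).filter (fun q => (q.1 * q.2) ^ 5 = 1)

set_option maxHeartbeats 8000000 in
set_option maxRecDepth 100000 in
lemma SP_card : SP.card = 120 := by decide

lemma card_perm5 : Nat.card (Perm (Fin 5)) = 120 := by
  rw [Nat.card_eq_fintype_card, Fintype.card_perm, Fintype.card_fin]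
  rfl

lemma card_A5 : Nat.card A5 = 60 := by
  show Nat.card (alternatingGroup (Fin 5)) = 60
  have h := two_mul_card_alternatingGroup (α := Fin 5)
  rw [Fintype.card_perm, Fintype.card_fin, show Nat.factorial 5 = 120 from rfl,
    Fintype.card_eq_nat_card] at h
  omega

def a5 : A5 := ⟨pa, hpaA⟩
def b5 : A5 := ⟨pb, hpbA⟩

lemma ha2 : a5 ^ 2 = 1 := Subtype.ext (by simpa [a5] using hpa2)
lemma ha1 : a5 ≠ 1 := fun h => hpa1 (congrArg Subtype.val h)
lemma hb3 : b5 ^ 3 = 1 := Subtype.ext (by simpa [b5] using hpb3)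
lemma hb1 : b5 ≠ 1 := fun h => hpb1 (congrArg Subtype.val h)
lemma hab5 : (a5 * b5) ^ 5 = 1 := Subtype.ext (by simpa [a5, b5] using hpab5)
lemma hab1 : a5 * b5 ≠ 1 := by
  intro h
  have h2 : a5 = b5⁻¹ := eq_inv_of_mul_eq_one_left h
  have h3 : a5 ^ 3 = 1 := by
    rw [h2, inv_pow, hb3, inv_one]
  have h4 : a5 = 1 := by
    rw [pow_succ, ha2, one_mul] at h3
    exact h3
  exact ha1 h4

instance : Fact (Nat.Prime 2) := ⟨Nat.prime_two⟩
instance : Fact (Nat.Prime 3) := ⟨Nat.prime_three⟩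
instance : Fact (Nat.Prime 5) := ⟨by norm_num⟩

lemma closure_ab : Subgroup.closure ({a5, b5} : Set A5) = ⊤ := by
  set K := Subgroup.closure ({a5, b5} : Set A5) with hK
  have haK : a5 ∈ K := subset_closure (by simp)
  have hbK : b5 ∈ K := subset_closure (by simp)
  have habK : a5 * b5 ∈ K := mul_mem haK hbK
  have d2 : (2 : ℕ) ∣ Nat.card K := by
    have := orderOf_dvd_natCard (⟨a5, haK⟩ : K)
    rwa [Subgroup.orderOf_mk, orderOf_eq_prime ha2 ha1] at this
  have d3 : (3 : ℕ) ∣ Nat.card K := by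
    have := orderOf_dvd_natCard (⟨b5, hbK⟩ : K)
    rwa [Subgroup.orderOf_mk, orderOf_eq_prime hb3 hb1] at this
  have d5 : (5 : ℕ) ∣ Nat.card K := by
    have := orderOf_dvd_natCard (⟨a5 * b5, habK⟩ : K)
    rwa [Subgroup.orderOf_mk, orderOf_eq_prime hab5 hab1] at this
  have d30 : (30 : ℕ) ∣ Nat.card K := by
    have d6 : (6 : ℕ) ∣ Nat.card K :=
      Nat.Coprime.mul_dvd_of_dvd_of_dvd (by norm_num) d2 d3
    exact Nat.Coprime.mul_dvd_of_dvd_of_dvd (by norm_num) d6 d5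
  have hcm : Nat.card K * K.index = 60 := by
    rw [Subgroup.card_mul_index, card_A5]
  obtain ⟨t, ht⟩ := d30
  have hti : t * K.index = 2 := by
    apply Nat.eq_of_mul_eq_mul_left (show 0 < 30 by norm_num)
    rw [← mul_assoc, ← ht, hcm]
  have hind : K.index ∣ 2 := Dvd.intro_left t hti
  rcases (Nat.dvd_prime Nat.prime_two).mp hind with h1 | h2idx
  · exact Subgroup.index_eq_one.mp h1
  · -- index 2: K contains all squares, hence all 3-cycles, hence K = ⊤
    have key : ∀ σ : Perm (Fin 5), σ.IsThreeCycle → σ ∈ Subgroup.map A5.subtype K := by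
      intro σ hσ
      have hm : σ ∈ A5 := hσ.mem_alternatingGroup
      set s : A5 := ⟨σ, hm⟩ with hs
      have hσ3 : σ ^ 3 = 1 := by
        have := pow_orderOf_eq_one σ
        rwa [hσ.orderOf] at this
      have hs3 : s ^ 3 = 1 := Subtype.ext (by simpa using hσ3)
      have h4 : (s ^ 2) ^ 2 = s := by
        rw [← pow_mul, show 2 * 2 = 3 + 1 from rfl, pow_succ, hs3, one_mul]
      have hsK : s ∈ K := by
        have := Subgroup.sq_mem_of_index_two h2idx (s ^ 2)
        rwa [h4] at this
      exact ⟨s, hsK, rfl⟩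
    have hle : A5 ≤ Subgroup.map A5.subtype K := by
      refine le_trans (le_of_eq closure_three_cycles_eq_alternating.symm) ?_
      exact (Subgroup.closure_le _).mpr (fun σ hσ => key σ hσ)
    rw [eq_top_iff']
    intro x
    obtain ⟨y, hyK, hyx⟩ := hle x.2
    have hxy : y = x := Subtype.ext hyx
    exact hxy ▸ hyK

noncomputable instance : Finite (MulAut A5) :=
  Finite.of_injective (fun f => (f : A5 ≃ A5)) MulEquiv.toEquiv_injective

noncomputable def j : Perm (Fin 5) →* MulAut A5 := MulAut.conjNormal

lemma j_inj : Function.Injective j := by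
  rw [injective_iff_map_eq_one]
  intro σ hσ
  have h1 : ∀ x : A5, (MulAut.conjNormal σ x : Perm (Fin 5)) = x := by
    intro x
    have : MulAut.conjNormal σ x = x := by
      rw [show MulAut.conjNormal σ = j σ from rfl, hσ]; rfl
    exact congrArg Subtype.val this
  apply centralizer_c σ
  · have := h1 ⟨c1, hc1A⟩
    rw [MulAut.conjNormal_apply] at this
    have h2 : σ * c1 * σ⁻¹ * σ = c1 * σ := by rw [this]
    simpa [mul_assoc] using h2
  · have := h1 ⟨c2, hc2A⟩
    rw [MulAut.conjNormal_apply] at this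
    have h2 : σ * c2 * σ⁻¹ * σ = c2 * σ := by rw [this]
    simpa [mul_assoc] using h2

lemma coe_eq_one {x : A5} (h : x = 1) : (x : Perm (Fin 5)) = 1 := by rw [h]; rfl

lemma mem_SP (φ : MulAut A5) : ((φ a5 : Perm (Fin 5)), (φ b5 : Perm (Fin 5))) ∈ SP := by
  have hx2 : (φ a5 : Perm (Fin 5)) ^ 2 = 1 := by
    have : φ a5 ^ 2 = 1 := by rw [← map_pow, ha2, map_one]
    simpa using congrArg Subtype.val this
  have hx1 : (φ a5 : Perm (Fin 5)) ≠ 1 := by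
    intro h
    have : φ a5 = 1 := Subtype.ext (show _ = ((1 : A5) : Perm (Fin 5)) from h)
    exact ha1 (φ.injective (by rw [this, map_one]))
  have hy3 : (φ b5 : Perm (Fin 5)) ^ 3 = 1 := by
    have : φ b5 ^ 3 = 1 := by rw [← map_pow, hb3, map_one]
    simpa using congrArg Subtype.val this
  have hy1 : (φ b5 : Perm (Fin 5)) ≠ 1 := by
    intro h
    have : φ b5 = 1 := Subtype.ext (show _ = ((1 : A5) : Perm (Fin 5)) from h)
    exact hb1 (φ.injective (by rw [this, map_one]))
  have hxy : ((φ a5 : Perm (Fin 5)) * (φ b5 : Perm (Fin 5))) ^ 5 = 1 := by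
    have : (φ a5 * φ b5) ^ 5 = 1 := by rw [← map_mul, ← map_pow, hab5, map_one]
    simpa using congrArg Subtype.val this
  refine Finset.mem_filter.mpr ⟨Finset.mem_product.mpr ⟨?_, ?_⟩, hxy⟩
  · exact Finset.mem_filter.mpr ⟨Finset.mem_univ _, hx2, hx1⟩
  · exact Finset.mem_filter.mpr ⟨Finset.mem_univ _, hy3, hy1⟩

set_option maxRecDepth 40000 in
lemma card_mulAut_le : Nat.card (MulAut A5) ≤ 120 := by
  have hΦ : Function.Injective
      (fun φ : MulAut A5 => (⟨_, mem_SP φ⟩ : {q // q ∈ SP})) := by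
    intro φ ψ h
    have h' : ((φ a5 : Perm (Fin 5)), (φ b5 : Perm (Fin 5)))
        = ((ψ a5 : Perm (Fin 5)), (ψ b5 : Perm (Fin 5))) := congrArg Subtype.val h
    have h1 : φ a5 = ψ a5 := Subtype.ext (congrArg Prod.fst h')
    have h2 : φ b5 = ψ b5 := Subtype.ext (congrArg Prod.snd h')
    have : (φ : A5 →* A5) = (ψ : A5 →* A5) := by
      apply MonoidHom.eq_of_eqOn_dense closure_ab
      intro x hx
      rcases hx with hx | hx
      · subst hx; exact h1
      · rw [Set.mem_singleton_iff] at hx; subst hx; exact h2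
    exact MulEquiv.toMonoidHom_injective this
  have := Nat.card_le_card_of_injective _ hΦ
  rwa [Nat.card_eq_fintype_card (α := {q // q ∈ SP}), Fintype.card_coe, SP_card] at this

lemma card_mulAut_eq : Nat.card (MulAut A5) = 120 := by
  have hge := Nat.card_le_card_of_injective j j_inj
  rw [card_perm5] at hge
  have := card_mulAut_le
  omega

lemma j_bij : Function.Bijective j :=
  (Nat.bijective_iff_injective_and_card j).mpr ⟨j_inj, by rw [card_perm5, card_mulAut_eq]⟩

noncomputable def autEquiv : Perm (Fin 5) ≃* MulAut A5 := MulEquiv.ofBijective j j_bij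

lemma autEquiv_apply (σ : Perm (Fin 5)) : autEquiv σ = j σ := rfl

lemma conjNormal_coe {G : Type*} [Group G] {H : Subgroup G} [H.Normal] (h y : H) :
    MulAut.conjNormal (h : G) y = h * y * h⁻¹ := by
  apply Subtype.ext
  rw [MulAut.conjNormal_apply]
  push_cast
  rfl

end Stmt11Aux

open Stmt11Aux
/-- If a finite group `G` contains a normal subgroup `H` isomorphic to `A₅`
of prime index `p`, then `G` is isomorphic to `S₅` or to `A₅ × Cₚ`. -/
theorem stmt11 {G : Type*} [Group G] [Finite G]
    (H : Subgroup G) [H.Normal]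
    (hH : Nonempty (H ≃* alternatingGroup (Fin 5)))
    (p : ℕ) (hp : p.Prime) (hidx : H.index = p) :
    Nonempty (G ≃* Equiv.Perm (Fin 5)) ∨
    Nonempty (G ≃* (alternatingGroup (Fin 5) × Multiplicative (ZMod p))) := by
  classical
  obtain ⟨e⟩ := hH
  haveI : Fact p.Prime := ⟨hp⟩
  haveI : NeZero p := ⟨hp.ne_zero⟩
  set Θ : MulAut H ≃* MulAut A5 := MulAut.congr e with hΘ
  set f : G →* Perm (Fin 5) :=
    (autEquiv.symm.toMonoidHom.comp Θ.toMonoidHom).comp MulAut.conjNormal with hf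
  have hfH : ∀ h : H, f (h : G) = ((e h : A5) : Perm (Fin 5)) := by
    intro h
    have key : Θ (MulAut.conjNormal (h : G)) = autEquiv ((e h : A5) : Perm (Fin 5)) := by
      apply MulEquiv.ext
      intro x
      have hrhs : autEquiv ((e h : A5) : Perm (Fin 5)) x = (e h) * x * (e h)⁻¹ := by
        rw [autEquiv_apply]
        exact conjNormal_coe (e h) x
      rw [hrhs, hΘ]
      simp only [MulAut.congr_apply, MulEquiv.trans_apply]
      rw [conjNormal_coe h (e.symm x)]
      rw [map_mul, map_mul, map_inv, MulEquiv.apply_symm_apply]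
    show autEquiv.symm (Θ (MulAut.conjNormal (h : G))) = _
    rw [key, MulEquiv.symm_apply_apply]
  have hcardH : Nat.card H = 60 := (Nat.card_congr e.toEquiv).trans card_A5
  have hcardG : Nat.card G = 60 * p := by
    have := H.card_mul_index
    rw [hcardH, hidx] at this
    omega
  set C : Subgroup G := f.ker with hC
  have hdisj : ∀ g : G, g ∈ H → g ∈ C → g = 1 := by
    intro g hgH hgC
    have h1 : f g = 1 := hgC
    have h2 : f g = ((e ⟨g, hgH⟩ : A5) : Perm (Fin 5)) := hfH ⟨g, hgH⟩
    have h3 : e ⟨g, hgH⟩ = 1 := Subtype.ext (by rw [← h2, h1]; rfl)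
    have h4 : (⟨g, hgH⟩ : H) = 1 := e.injective (by rw [h3, map_one])
    exact congrArg Subtype.val h4
  have hCp : Nat.card C ∣ p := by
    set φC : C →* G ⧸ H := (QuotientGroup.mk' H).comp C.subtype with hφC
    have hinj : Function.Injective φC := by
      rw [injective_iff_map_eq_one]
      intro c hc
      have : (c : G) ∈ H := (QuotientGroup.eq_one_iff _).mp hc
      exact Subtype.ext (hdisj (c : G) this c.2)
    have h1 : Nat.card C = Nat.card φC.range := Nat.card_congr (MonoidHom.ofInjective hinj).toEquiv
    have h2 : Nat.card φC.range ∣ Nat.card (G ⧸ H) := Subgroup.card_subgroup_dvd_card _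
    rw [← Subgroup.index_eq_card, hidx] at h2
    exact h1 ▸ h2
  rcases (Nat.dvd_prime hp).mp hCp with hC1 | hCp'
  · -- f is injective, p = 2, G ≅ S₅
    left
    have hker : f.ker = ⊥ := Subgroup.card_eq_one.mp hC1
    have hfinj : Function.Injective f := (MonoidHom.ker_eq_bot_iff f).mp hker
    have hdvd : Nat.card G ∣ 120 := by
      have h1 : Nat.card G = Nat.card f.range :=
        Nat.card_congr (MonoidHom.ofInjective hfinj).toEquiv
      have h2 : Nat.card f.range ∣ Nat.card (Perm (Fin 5)) :=
        Subgroup.card_subgroup_dvd_card _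
      rw [card_perm5] at h2
      exact h1 ▸ h2
    have hp2 : p = 2 := by
      rw [hcardG] at hdvd
      have : p ∣ 2 := by
        have h120 : (120 : ℕ) = 60 * 2 := by norm_num
        rw [h120] at hdvd
        exact (mul_dvd_mul_iff_left (show (60:ℕ) ≠ 0 by norm_num)).mp hdvd
      exact (Nat.prime_dvd_prime_iff_eq hp Nat.prime_two).mp this
    have hbij : Function.Bijective f := by
      refine (Nat.bijective_iff_injective_and_card f).mpr ⟨hfinj, ?_⟩
      rw [hcardG, card_perm5, hp2]
    exact ⟨MulEquiv.ofBijective f hbij⟩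
  · -- G ≅ H × C ≅ A₅ × C_p
    right
    have hcomm : ∀ (h : H) (c : C), Commute (H.subtype h) (C.subtype c) := by
      intro h c
      have hc1 : MulAut.conjNormal (c : G) = (1 : MulAut H) := by
        have h1 : f (c : G) = 1 := c.2
        have h2 : autEquiv.symm (Θ (MulAut.conjNormal (c : G))) = 1 := h1
        have h3 : Θ (MulAut.conjNormal (c : G)) = 1 := by
          have := congrArg autEquiv h2
          rwa [MulEquiv.apply_symm_apply, map_one] at this
        have := congrArg Θ.symm h3
        rwa [MulEquiv.symm_apply_apply, map_one] at this
      have h4 : MulAut.conjNormal (c : G) h = h := by rw [hc1]; rfl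
      have h5 : (c : G) * (h : G) * (c : G)⁻¹ = (h : G) := by
        have := congrArg Subtype.val h4
        rwa [MulAut.conjNormal_apply] at this
      have h6 : (c : G) * (h : G) = (h : G) * (c : G) := by
        have := congrArg (· * (c : G)) h5
        simpa [mul_assoc] using this
      exact h6.symm
    set ψ : H × C →* G := MonoidHom.noncommCoprod H.subtype C.subtype hcomm with hψ
    have hψinj : Function.Injective ψ := by
      rw [injective_iff_map_eq_one]
      rintro ⟨h, c⟩ hhc
      have h1 : (h : G) * (c : G) = 1 := hhc
      have h2 : (h : G) = ((c : G))⁻¹ := eq_inv_of_mul_eq_one_left h1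
      have h3 : (h : G) ∈ C := h2 ▸ (inv_mem c.2)
      have h4 : (h : G) = 1 := hdisj (h : G) h.2 h3
      have h5 : (c : G) = 1 := by
        rw [h4, one_mul] at h1
        exact h1
      exact Prod.ext (Subtype.ext h4) (Subtype.ext h5)
    have hbij : Function.Bijective ψ := by
      refine (Nat.bijective_iff_injective_and_card ψ).mpr ⟨hψinj, ?_⟩
      rw [Nat.card_prod, hcardH, hCp', hcardG]
    have ec : C ≃* Multiplicative (ZMod p) := by
      refine mulEquivOfPrimeCardEq hCp' ?_
      rw [Nat.card_eq_fintype_card, Fintype.card_multiplicative, ZMod.card]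
    exact ⟨(MulEquiv.ofBijective ψ hbij).symm.trans (e.prodCongr ec)⟩
end

section
/- Let L be a finite subgroup of SO(3) = Matrix.specialOrthogonalGroup (Fin 3) ℝ and let A be a subgroup of L that is isomorphic to the alternating group A₅. Then A = L; that is, A₅ is maximal among the finite subgroups of SO(3). -/
/-- The special unitary group (in particular the special orthogonal group
`Matrix.specialOrthogonalGroup`) is a group: inverses are given by `star`. -/
noncomputable instance Matrix.specialUnitaryGroup.instGroup
    {n : Type*} [DecidableEq n] [Fintype n] {α : Type*} [CommRing α] [StarRing α] :
    Group (Matrix.specialUnitaryGroup n α) :=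
  { (inferInstance : Monoid (Matrix.specialUnitaryGroup n α)) with
    inv := fun A => ⟨star (A : Matrix n n α), by
      have h := Matrix.mem_specialUnitaryGroup_iff.mp A.2
      refine Matrix.mem_specialUnitaryGroup_iff.mpr ⟨Unitary.star_mem h.1, ?_⟩
      rw [Matrix.star_eq_conjTranspose, Matrix.det_conjTranspose, h.2, star_one]⟩
    inv_mul_cancel := fun A => Subtype.ext <| by
      have h := Matrix.mem_specialUnitaryGroup_iff.mp A.2
      exact (Unitary.mem_iff.mp h.1).1 }

open Matrix

namespace SOaux

abbrev V := Fin 3 → ℝ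
abbrev M3 := Matrix (Fin 3) (Fin 3) ℝ

lemma dot_self_nonneg (v : V) : 0 ≤ v ⬝ᵥ v :=
  Finset.sum_nonneg fun i _ => mul_self_nonneg (v i)

lemma dot_mulVec_mulVec {M : M3} (h : Mᵀ * M = 1) (v w : V) :
    (M *ᵥ v) ⬝ᵥ (M *ᵥ w) = v ⬝ᵥ w := by
  rw [dotProduct_mulVec, vecMul_mulVec, h, vecMul_one]

lemma exists_unit_smul {v : V} (hv : v ≠ 0) :
    ∃ r : ℝ, r ≠ 0 ∧ (r • v) ⬝ᵥ (r • v) = 1 := by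
  have h0 : 0 < v ⬝ᵥ v := by
    rcases lt_or_eq_of_le (dot_self_nonneg v) with h | h
    · exact h
    · exact absurd (dotProduct_self_eq_zero.mp h.symm) hv
  refine ⟨(Real.sqrt (v ⬝ᵥ v))⁻¹, by positivity, ?_⟩
  rw [smul_dotProduct, dotProduct_smul, smul_eq_mul, smul_eq_mul, ← mul_assoc, ← mul_inv,
    Real.mul_self_sqrt h0.le]
  exact inv_mul_cancel₀ h0.ne'

/-- The matrix with rows `a`, `b`, `a ⨯₃ b`. -/
def rmat (a b : V) : M3 := Matrix.of ![a, b, a ⨯₃ b]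

lemma rmat_mul_transpose {a b : V} (ha : a ⬝ᵥ a = 1) (hb : b ⬝ᵥ b = 1) (hab : a ⬝ᵥ b = 0) :
    rmat a b * (rmat a b)ᵀ = 1 := by
  have hc : (a ⨯₃ b) ⬝ᵥ (a ⨯₃ b) = 1 := by
    rw [cross_dot_cross, ha, hb, hab]; ring
  have hba : b ⬝ᵥ a = 0 := by rwa [dotProduct_comm]
  have h1 : a ⬝ᵥ (a ⨯₃ b) = 0 := dot_self_cross a b
  have h2 : b ⬝ᵥ (a ⨯₃ b) = 0 := dot_cross_self a b
  have h3 : (a ⨯₃ b) ⬝ᵥ a = 0 := by rw [dotProduct_comm]; exact h1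
  have h4 : (a ⨯₃ b) ⬝ᵥ b = 0 := by rw [dotProduct_comm]; exact h2
  have key : ∀ i j, (rmat a b * (rmat a b)ᵀ) i j = (rmat a b) i ⬝ᵥ (rmat a b) j :=
    fun i j => rfl
  ext i j
  rw [key]
  fin_cases i <;> fin_cases j <;>
    simp [rmat, Matrix.one_apply, Fin.ext_iff] <;>
    simp only [dotProduct, Fin.sum_univ_three, Matrix.of_apply, Matrix.cons_val_zero, Matrix.cons_val_one, Matrix.cons_val_two, Matrix.head_cons, Matrix.tail_cons, Matrix.cons_val_fin_one] at * <;> linarith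

lemma transpose_mul_rmat {a b : V} (ha : a ⬝ᵥ a = 1) (hb : b ⬝ᵥ b = 1) (hab : a ⬝ᵥ b = 0) :
    (rmat a b)ᵀ * rmat a b = 1 :=
  mul_eq_one_comm.mp (rmat_mul_transpose ha hb hab)

lemma det_rmat {a b : V} (ha : a ⬝ᵥ a = 1) (hb : b ⬝ᵥ b = 1) (hab : a ⬝ᵥ b = 0) :
    (rmat a b).det = 1 := by
  have h : (rmat a b).det = a ⬝ᵥ b ⨯₃ (a ⨯₃ b) := (triple_product_eq_det a b _).symm
  rw [h, triple_product_permutation, triple_product_permutation, cross_dot_cross, ha, hb, hab]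
  ring





lemma expand_basis {a b : V} (ha : a ⬝ᵥ a = 1) (hb : b ⬝ᵥ b = 1) (hab : a ⬝ᵥ b = 0)
    (w : V) : w = (a ⬝ᵥ w) • a + (b ⬝ᵥ w) • b + ((a ⨯₃ b) ⬝ᵥ w) • (a ⨯₃ b) := by
  have h1 : w = (rmat a b)ᵀ *ᵥ ((rmat a b) *ᵥ w) := by
    rw [mulVec_mulVec, transpose_mul_rmat ha hb hab, one_mulVec]
  conv_lhs => rw [h1]
  funext k
  simp [rmat, mulVec, dotProduct, Fin.sum_univ_three, Matrix.transpose_apply]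
  ring

lemma eq_one_of_fixes_pair {M : M3} (hM : Mᵀ * M = 1) (hdet : M.det = 1)
    {a b : V} (ha : a ⬝ᵥ a = 1) (hb : b ⬝ᵥ b = 1) (hab : a ⬝ᵥ b = 0)
    (hfa : M *ᵥ a = a) (hfb : M *ᵥ b = b) : M = 1 := by
  set c := a ⨯₃ b with hcdef
  set R := rmat a b with hRdef
  have hRRt : R * Rᵀ = 1 := rmat_mul_transpose ha hb hab
  have hRtR : Rᵀ * R = 1 := transpose_mul_rmat ha hb hab
  have hdR : R.det = 1 := det_rmat ha hb hab
  -- M *ᵥ c is perpendicular to a and b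
  have hac : a ⬝ᵥ (M *ᵥ c) = 0 := by
    calc a ⬝ᵥ (M *ᵥ c) = (M *ᵥ a) ⬝ᵥ (M *ᵥ c) := by rw [hfa]
    _ = a ⬝ᵥ c := dot_mulVec_mulVec hM a c
    _ = 0 := dot_self_cross a b
  have hbc : b ⬝ᵥ (M *ᵥ c) = 0 := by
    calc b ⬝ᵥ (M *ᵥ c) = (M *ᵥ b) ⬝ᵥ (M *ᵥ c) := by rw [hfb]
    _ = b ⬝ᵥ c := dot_mulVec_mulVec hM b c
    _ = 0 := dot_cross_self a b
  set t : ℝ := c ⬝ᵥ (M *ᵥ c) with htdef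
  have hw : M *ᵥ c = t • c := by
    have := expand_basis ha hb hab (M *ᵥ c)
    rwa [hac, hbc, zero_smul, zero_smul, zero_add, zero_add, ← hcdef, ← htdef] at this
  -- the matrix M * Rᵀ has columns a, b, t • c
  have cols : (M * Rᵀ)ᵀ = (![a, b, t • c] : M3) := by
    have key : ∀ j, (M * Rᵀ)ᵀ j = M *ᵥ (R j) := by
      intro j
      rw [Matrix.transpose_mul]
      show (R j) ᵥ* Mᵀ = _
      rw [vecMul_transpose]
    funext j
    rw [key]
    fin_cases j
    · exact hfa
    · exact hfb
    · exact hw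
  have hdet2 : (M * Rᵀ).det = 1 := by
    rw [Matrix.det_mul, hdet, Matrix.det_transpose, hdR, one_mul]
  have ht : t = 1 := by
    have h2 : (M * Rᵀ).det = Matrix.det ![a, b, t • c] := by
      rw [← Matrix.det_transpose (M * Rᵀ), cols]
    have h3 : Matrix.det ![a, b, t • c] = t * (a ⬝ᵥ b ⨯₃ c) := by
      rw [← triple_product_eq_det]
      rw [show b ⨯₃ (t • c) = t • (b ⨯₃ c) from (crossProduct b).map_smul t c,
        dotProduct_smul]
      rfl
    have h4 : a ⬝ᵥ b ⨯₃ c = 1 := by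
      rw [show a ⬝ᵥ b ⨯₃ c = R.det from triple_product_eq_det a b c, hdR]
    rw [h2, h3, h4] at hdet2
    linarith [hdet2]
  have hMR : M * Rᵀ = Rᵀ := by
    have : (M * Rᵀ)ᵀ = R := by
      rw [cols, ht, one_smul]
      rfl
    calc M * Rᵀ = ((M * Rᵀ)ᵀ)ᵀ := by rw [Matrix.transpose_transpose]
    _ = Rᵀ := by rw [this]
  calc M = M * (Rᵀ * R) := by rw [hRtR, mul_one]
  _ = (M * Rᵀ) * R := by rw [mul_assoc]
  _ = Rᵀ * R := by rw [hMR]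
  _ = 1 := hRtR



/-- A nontrivial rotation has exactly the two unit fixed vectors `u` and `-u`. -/
lemma fixed_vectors {M : M3} (hM : Mᵀ * M = 1) (hdet : M.det = 1) (hne : M ≠ 1) :
    ∃ u : V, (u ⬝ᵥ u = 1 ∧ M *ᵥ u = u) ∧
      ∀ w : V, w ⬝ᵥ w = 1 → M *ᵥ w = w → w = u ∨ w = -u := by
  -- `det (M - 1) = 0`
  have hdet0 : (M - 1).det = 0 := by
    have h1 : Mᵀ * (M - 1) = (1 - M)ᵀ := by
      rw [Matrix.mul_sub, hM, mul_one, Matrix.transpose_sub, Matrix.transpose_one]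
    have h2 : (Mᵀ * (M - 1)).det = (M - 1).det := by
      rw [Matrix.det_mul, Matrix.det_transpose, hdet, one_mul]
    have h3 : ((1 - M)ᵀ).det = -(M - 1).det := by
      rw [Matrix.det_transpose, (neg_sub M 1).symm, Matrix.det_neg]
      norm_num
    rw [h1, h3] at h2
    linarith
  obtain ⟨v, hv0, hv⟩ := (Matrix.exists_mulVec_eq_zero_iff).mpr hdet0
  have hfixv : M *ᵥ v = v := by
    have := hv
    rwa [Matrix.sub_mulVec, Matrix.one_mulVec, sub_eq_zero] at this
  obtain ⟨r, hr0, hr⟩ := exists_unit_smul hv0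
  set u : V := r • v with hudef
  have hfixu : M *ᵥ u = u := by rw [hudef, mulVec_smul, hfixv]
  refine ⟨u, ⟨hr, hfixu⟩, ?_⟩
  intro w hw hfixw
  set s : ℝ := u ⬝ᵥ w with hsdef
  set w' : V := w - s • u with hw'def
  have hfixw' : M *ᵥ w' = w' := by
    rw [hw'def, Matrix.mulVec_sub, mulVec_smul, hfixw, hfixu]
  have huw' : u ⬝ᵥ w' = 0 := by
    rw [hw'def, dotProduct_sub, dotProduct_smul, hr, ← hsdef]
    simp
  have hw'0 : w' = 0 := by
    by_contra hc
    obtain ⟨r', hr'0, hr'⟩ := exists_unit_smul hc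
    have hperp : u ⬝ᵥ (r' • w') = 0 := by rw [dotProduct_smul, huw']; simp
    have hfixb : M *ᵥ (r' • w') = r' • w' := by rw [mulVec_smul, hfixw']
    exact hne (eq_one_of_fixes_pair hM hdet hr hr' hperp hfixu hfixb)
  have hwsu : w = s • u := by rwa [hw'def, sub_eq_zero] at hw'0
  have hs2 : s * s = 1 := by
    have : w ⬝ᵥ w = s * s * (u ⬝ᵥ u) := by
      rw [hwsu, smul_dotProduct, dotProduct_smul, smul_eq_mul, smul_eq_mul, mul_assoc]
    rw [hw, hr, mul_one] at this
    linarith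
  have : (s - 1) * (s + 1) = 0 := by ring_nf; linarith
  rcases mul_eq_zero.mp this with h | h
  · left
    rw [hwsu, show s = 1 by linarith, one_smul]
  · right
    rw [hwsu, show s = -1 by linarith, neg_smul, one_smul]

/-- Every unit vector has a unit perpendicular vector. -/
lemma exists_perp {a : V} (_ : a ⬝ᵥ a = 1) : ∃ b : V, b ⬝ᵥ b = 1 ∧ a ⬝ᵥ b = 0 := by
  by_cases h : a 1 = 0 ∧ a 2 = 0
  · exact ⟨![0, 1, 0], by simp [dotProduct, Fin.sum_univ_three],
      by simp [dotProduct, Fin.sum_univ_three, h.1]⟩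
  · set w : V := ![0, a 2, -(a 1)] with hwdef
    have hw0 : w ≠ 0 := by
      intro hc
      apply h
      constructor
      · have := congrFun hc 2
        simpa [hwdef] using this
      · have := congrFun hc 1
        simpa [hwdef] using this
    have haw : a ⬝ᵥ w = 0 := by
      simp [hwdef, dotProduct, Fin.sum_univ_three]
      ring
    obtain ⟨r, hr0, hr⟩ := exists_unit_smul hw0
    exact ⟨r • w, hr, by rw [dotProduct_smul, haw]; simp⟩

/-- A rotation matrix fixing `e₀`-axis (first row and column trivial) has the
standard 2D-rotation block form. -/
lemma block_form {G : M3} (hG : Gᵀ * G = 1) (hdG : G.det = 1)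
    (h00 : G 0 0 = 1) (h01 : G 0 1 = 0) (h02 : G 0 2 = 0)
    (h10 : G 1 0 = 0) (h20 : G 2 0 = 0) :
    G = (![![1, 0, 0], ![0, G 1 1, -(G 2 1)], ![0, G 2 1, G 1 1]] : M3) := by
  have e11 := congrFun (congrFun hG 1) 1
  have e22 := congrFun (congrFun hG 2) 2
  have e12 := congrFun (congrFun hG 1) 2
  simp only [Matrix.mul_apply, Fin.sum_univ_three, Matrix.transpose_apply,
    Matrix.one_apply] at e11 e22 e12
  rw [Matrix.det_fin_three] at hdG
  norm_num [h01, h02, h10, h20, h00, Fin.ext_iff] at e11 e22 e12 hdG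
  have key : (G 2 2 - G 1 1) ^ 2 + (G 1 2 + G 2 1) ^ 2 = 0 := by nlinarith [e11, e22, hdG]
  have z1 : (G 2 2 - G 1 1) ^ 2 = 0 := by nlinarith [sq_nonneg (G 2 2 - G 1 1), sq_nonneg (G 1 2 + G 2 1)]
  have z2 : (G 1 2 + G 2 1) ^ 2 = 0 := by nlinarith [sq_nonneg (G 2 2 - G 1 1), sq_nonneg (G 1 2 + G 2 1)]
  have k1 : G 2 2 = G 1 1 := by
    have := pow_eq_zero_iff (n := 2) (by norm_num) |>.mp z1
    linarith
  have k2 : G 1 2 = -(G 2 1) := by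
    have := pow_eq_zero_iff (n := 2) (by norm_num) |>.mp z2
    linarith
  funext i j
  fin_cases i <;> fin_cases j <;>
    simp [h00, h01, h02, h10, h20, k1, k2, Matrix.vecHead, Matrix.vecTail]

lemma block_mul_comm {G H : M3} (p q p' q' : ℝ)
    (hG : G = (![![1, 0, 0], ![0, p, -q], ![0, q, p]] : M3))
    (hH : H = (![![1, 0, 0], ![0, p', -q'], ![0, q', p']] : M3)) :
    G * H = H * G := by
  subst hG hH
  funext i j
  erw [Matrix.mul_apply, Matrix.mul_apply]
  fin_cases i <;> fin_cases j <;>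
    simp [Matrix.mul_apply, Fin.sum_univ_three, Matrix.vecHead, Matrix.vecTail] <;> ring

/-- Two rotations fixing a common unit vector commute. -/
lemma commute_of_fix {M N : M3} (hM : Mᵀ * M = 1) (hdM : M.det = 1)
    (hN : Nᵀ * N = 1) (hdN : N.det = 1) {v : V} (hv : v ⬝ᵥ v = 1)
    (hMv : M *ᵥ v = v) (hNv : N *ᵥ v = v) : M * N = N * M := by
  obtain ⟨b, hb, hvb⟩ := exists_perp hv
  set R := rmat v b with hRdef
  have hRRt : R * Rᵀ = 1 := rmat_mul_transpose hv hb hvb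
  have hRtR : Rᵀ * R = 1 := transpose_mul_rmat hv hb hvb
  have hdR : R.det = 1 := det_rmat hv hb hvb
  -- entries of conjugated matrices
  have entry : ∀ (X : M3) (hX : X *ᵥ v = v) (hXo : Xᵀ * X = 1) (i j : Fin 3),
      (R * X * Rᵀ) i j = (R i) ⬝ᵥ (X *ᵥ (R j)) := by
    intro X hX hXo i j
    have : (R * X * Rᵀ) i j = ((R * X) i) ⬝ᵥ (R j) := rfl
    rw [this]
    have h2 : (R * X) i = (R i) ᵥ* X := rfl
    rw [h2, ← dotProduct_mulVec]
  have hR0 : R 0 = v := rfl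
  have hR1 : R 1 = b := rfl
  have hR2 : R 2 = v ⨯₃ b := rfl
  have main : ∀ (X : M3) (hXo : Xᵀ * X = 1) (hdX : X.det = 1) (hX : X *ᵥ v = v),
      ∃ p q : ℝ, R * X * Rᵀ = (![![1, 0, 0], ![0, p, -q], ![0, q, p]] : M3) := by
    intro X hXo hdX hX
    set G := R * X * Rᵀ with hGdef
    have hGo : Gᵀ * G = 1 := by
      rw [hGdef]
      calc (R * X * Rᵀ)ᵀ * (R * X * Rᵀ) = R * Xᵀ * (Rᵀ * R) * X * Rᵀ := by
            simp only [Matrix.transpose_mul, Matrix.transpose_transpose]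
            noncomm_ring
      _ = R * (Xᵀ * X) * Rᵀ := by rw [hRtR]; noncomm_ring
      _ = 1 := by rw [hXo, mul_one, hRRt]
    have hdG : G.det = 1 := by
      rw [hGdef, Matrix.det_mul, Matrix.det_mul, Matrix.det_transpose, hdR, hdX]
      norm_num
    have h00 : G 0 0 = 1 := by
      rw [hGdef, entry X hX hXo, hR0, hX, hv]
    have h01 : G 0 1 = 0 := by
      rw [hGdef, entry X hX hXo, hR0, hR1]
      have hh : v ⬝ᵥ (X *ᵥ b) = (X *ᵥ v) ⬝ᵥ (X *ᵥ b) := by rw [hX]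
      rw [hh, dot_mulVec_mulVec hXo, hvb]
    have h02 : G 0 2 = 0 := by
      rw [hGdef, entry X hX hXo, hR0, hR2]
      have hh : v ⬝ᵥ (X *ᵥ (v ⨯₃ b)) = (X *ᵥ v) ⬝ᵥ (X *ᵥ (v ⨯₃ b)) := by rw [hX]
      rw [hh, dot_mulVec_mulVec hXo]
      exact dot_self_cross v b
    have h10 : G 1 0 = 0 := by
      rw [hGdef, entry X hX hXo, hR1, hR0, hX, dotProduct_comm, hvb]
    have h20 : G 2 0 = 0 := by
      rw [hGdef, entry X hX hXo, hR2, hR0, hX, dotProduct_comm]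
      exact dot_self_cross v b
    exact ⟨G 1 1, G 2 1, block_form hGo hdG h00 h01 h02 h10 h20⟩
  obtain ⟨p, q, hG⟩ := main M hM hdM hMv
  obtain ⟨p', q', hH⟩ := main N hN hdN hNv
  have hcomm : (R * M * Rᵀ) * (R * N * Rᵀ) = (R * N * Rᵀ) * (R * M * Rᵀ) := by
    exact block_mul_comm p q p' q' hG hH
  have expand : ∀ X Y : M3, (R * X * Rᵀ) * (R * Y * Rᵀ) = R * (X * Y) * Rᵀ := by
    intro X Y
    calc (R * X * Rᵀ) * (R * Y * Rᵀ) = R * X * (Rᵀ * R) * Y * Rᵀ := by noncomm_ring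
    _ = R * (X * Y) * Rᵀ := by rw [hRtR]; noncomm_ring
  rw [expand, expand] at hcomm
  -- cancel R
  have e : ∀ X : M3, Rᵀ * (R * X * Rᵀ) * R = X := by
    intro X
    calc Rᵀ * (R * X * Rᵀ) * R = (Rᵀ * R) * X * (Rᵀ * R) := by noncomm_ring
    _ = X := by rw [hRtR]; noncomm_ring
  have h2 : Rᵀ * (R * (M * N) * Rᵀ) * R = Rᵀ * (R * (N * M) * Rᵀ) * R := by rw [hcomm]
  rw [e, e] at h2
  exact h2

/-! ### Arithmetic of orbit sizes -/

lemma nt_aux {n o2 o3 s2 s3 : ℕ} (hn : 120 ≤ n)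
    (h2 : o2 * s2 = n) (h3 : o3 * s3 = n) (hs2 : 2 ≤ s2) (hs3 : 2 ≤ s3)
    (ho2 : 3 ≤ o2) (ho3 : 3 ≤ o3) (hsum : 2 * (o2 + o3) = n + 4) : False := by
  have k2 : 3 ≤ s2 := by
    rcases Nat.lt_or_ge s2 3 with h | h
    · interval_cases s2 <;> omega
    · exact h
  have k3 : 3 ≤ s3 := by
    rcases Nat.lt_or_ge s3 3 with h | h
    · interval_cases s3 <;> omega
    · exact h
  have b2 : 3 * o2 ≤ n := by
    have : o2 * 3 ≤ o2 * s2 := Nat.mul_le_mul_left o2 k2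
    omega
  have b3 : 3 * o3 ≤ n := by
    have : o3 * 3 ≤ o3 * s3 := Nat.mul_le_mul_left o3 k3
    omega
  have k2' : s2 ≤ 5 := by
    by_contra hc
    have : o2 * 6 ≤ o2 * s2 := Nat.mul_le_mul_left o2 (by omega)
    omega
  have k3' : s3 ≤ 5 := by
    by_contra hc
    have : o3 * 6 ≤ o3 * s3 := Nat.mul_le_mul_left o3 (by omega)
    omega
  interval_cases s2 <;> interval_cases s3 <;> omega

lemma nt {n o1 o2 o3 s1 s2 s3 : ℕ} (hn : 120 ≤ n)
    (h1 : o1 * s1 = n) (h2 : o2 * s2 = n) (h3 : o3 * s3 = n)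
    (hs1 : 2 ≤ s1) (hs2 : 2 ≤ s2) (hs3 : 2 ≤ s3)
    (hsum : o1 + o2 + o3 = n + 2) : o1 ≤ 2 ∨ o2 ≤ 2 ∨ o3 ≤ 2 := by
  by_contra hc
  push_neg at hc
  obtain ⟨ho1, ho2, ho3⟩ := hc
  by_cases c1 : s1 = 2
  · subst c1
    exact nt_aux hn h2 h3 hs2 hs3 (by omega) (by omega) (by omega)
  by_cases c2 : s2 = 2
  · subst c2
    exact nt_aux hn h1 h3 hs1 hs3 (by omega) (by omega) (by omega)
  by_cases c3 : s3 = 2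
  · subst c3
    exact nt_aux hn h1 h2 hs1 hs2 (by omega) (by omega) (by omega)
  -- all stabilizer orders at least 3 : impossible
  have b1 : 3 * o1 ≤ n := by
    have : o1 * 3 ≤ o1 * s1 := Nat.mul_le_mul_left o1 (by omega)
    omega
  have b2 : 3 * o2 ≤ n := by
    have : o2 * 3 ≤ o2 * s2 := Nat.mul_le_mul_left o2 (by omega)
    omega
  have b3 : 3 * o3 ≤ n := by
    have : o3 * 3 ≤ o3 * s3 := Nat.mul_le_mul_left o3 (by omega)
    omega
  omega

/-! ### Generic group facts -/

lemma normal_of_index_two {G : Type*} [Group G] (H : Subgroup G) (h : H.index = 2) :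
    H.Normal := by
  constructor
  intro n hn g
  have h1 := Subgroup.mul_mem_iff_of_index_two h (a := g) (b := n * g⁻¹)
  have h2 := Subgroup.mul_mem_iff_of_index_two h (a := n) (b := g⁻¹)
  have h3 : g⁻¹ ∈ H ↔ g ∈ H := H.inv_mem_iff
  rw [← mul_assoc] at h1
  tauto

/-! ### SO(3) basics -/

abbrev SO3 := Matrix.specialOrthogonalGroup (Fin 3) ℝ

lemma so3_star (g : SO3) : ((g : M3))ᵀ * (g : M3) = 1 := by
  have h := (Matrix.mem_specialUnitaryGroup_iff.mp g.2).1
  have h1 := (Unitary.mem_iff.mp h).1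
  have h2 : star (g : M3) = (g : M3)ᵀ := by
    funext i j
    simp [Matrix.star_eq_conjTranspose, Matrix.conjTranspose_apply]
  rwa [h2] at h1

lemma so3_det (g : SO3) : ((g : M3)).det = 1 :=
  (Matrix.mem_specialUnitaryGroup_iff.mp g.2).2

set_option maxHeartbeats 1000000 in
theorem main (L : Subgroup SO3) [Finite L]
    (A : Subgroup SO3) (hAL : A ≤ L)
    (e : A ≃* alternatingGroup (Fin 5)) :
    A = L := by
  classical
  by_contra hne
  letI : Fintype ↥L := Fintype.ofFinite _
  -- matrices of elements
  let mat : ↥L → M3 := fun g => ((g : SO3) : M3)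
  have hmul : ∀ g h : ↥L, mat (g * h) = mat g * mat h := fun _ _ => rfl
  have hone : mat 1 = 1 := rfl
  have matinj : ∀ {g h : ↥L}, mat g = mat h → g = h :=
    fun h => Subtype.ext (Subtype.ext h)
  have morth : ∀ g : ↥L, (mat g)ᵀ * mat g = 1 := fun g => so3_star _
  have mdet : ∀ g : ↥L, (mat g).det = 1 := fun g => so3_det _
  have matne : ∀ {g : ↥L}, g ≠ 1 → mat g ≠ 1 :=
    fun hg hc => hg (matinj (hc.trans hone.symm))
  -- the subgroup of `L` corresponding to `A`
  set A' : Subgroup ↥L := A.subgroupOf L with hA'def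
  have E : A' ≃* alternatingGroup (Fin 5) := (Subgroup.subgroupOfEquivOfLe hAL).trans e
  have cardA5 : Nat.card (alternatingGroup (Fin 5)) = 60 := by
    have h := two_mul_card_alternatingGroup (α := Fin 5)
    have hp : Fintype.card (Equiv.Perm (Fin 5)) = 120 := by
      rw [Fintype.card_perm, Fintype.card_fin]
      decide
    rw [hp] at h
    rw [Nat.card_eq_fintype_card]
    omega
  have cardA' : Nat.card A' = 60 := by
    rw [Nat.card_congr E.toEquiv, cardA5]
  -- a non-commuting pair in A₅
  have hA5 : ∃ x y : alternatingGroup (Fin 5), x * y ≠ y * x := by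
    refine ⟨⟨Equiv.swap 0 1 * Equiv.swap 2 3, ?_⟩, ⟨Equiv.swap 0 1 * Equiv.swap 1 2, ?_⟩, ?_⟩
    · rw [Equiv.Perm.mem_alternatingGroup]; decide
    · rw [Equiv.Perm.mem_alternatingGroup]; decide
    · intro hxy
      rw [Subtype.ext_iff] at hxy
      revert hxy
      decide
  -- if all of A' fixes a unit vector we get a contradiction
  have key_contra : ∀ v : V, v ⬝ᵥ v = 1 →
      (∀ g : ↥L, g ∈ A' → mat g *ᵥ v = v) → False := by
    intro v hv hfix
    obtain ⟨x, y, hxy⟩ := hA5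
    set a : ↥L := ((E.symm x : ↥A') : ↥L) with hadef
    set b : ↥L := ((E.symm y : ↥A') : ↥L) with hbdef
    have ha : a ∈ A' := (E.symm x).2
    have hb : b ∈ A' := (E.symm y).2
    have hcomm := commute_of_fix (morth a) (mdet a) (morth b) (mdet b) hv
      (hfix a ha) (hfix b hb)
    rw [← hmul, ← hmul] at hcomm
    have hab : a * b = b * a := matinj hcomm
    have h2 : E.symm x * E.symm y = E.symm y * E.symm x := by
      apply Subtype.ext
      simpa [hadef, hbdef] using hab
    apply hxy
    have h3 := congrArg E h2
    simpa using h3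
  -- the set of poles
  set P : Set V := {v | v ⬝ᵥ v = 1 ∧ ∃ g : ↥L, g ≠ 1 ∧ mat g *ᵥ v = v} with hPdef
  have hPfin : P.Finite := by
    have hsub : P ⊆ ⋃ g : ↥L, {v : V | v ⬝ᵥ v = 1 ∧ g ≠ 1 ∧ mat g *ᵥ v = v} := by
      intro v hv
      obtain ⟨hv1, g, hg, hgv⟩ := hv
      exact Set.mem_iUnion.mpr ⟨g, hv1, hg, hgv⟩
    refine Set.Finite.subset (Set.finite_iUnion ?_) hsub
    intro g
    by_cases hg : g = 1
    · subst hg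
      convert Set.finite_empty
      ext v
      simp
    · obtain ⟨u, ⟨hu1, hufix⟩, huniq⟩ := fixed_vectors (morth g) (mdet g) (matne hg)
      refine Set.Finite.subset ((Set.finite_singleton (-u)).insert u) ?_
      rintro w ⟨hw1, -, hwfix⟩
      rcases huniq w hw1 hwfix with h | h <;> simp [h]
  -- the action of L on the poles
  letI : SMul ↥L ↥P := ⟨fun g x => ⟨mat g *ᵥ x.1, by
    obtain ⟨hx1, g0, hg0, hg0fix⟩ := x.2
    refine ⟨by rw [dot_mulVec_mulVec (morth g)]; exact hx1, g * g0 * g⁻¹, ?_, ?_⟩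
    · intro hc
      apply hg0
      have h1 := congrArg (fun z => g⁻¹ * z * g) hc
      simpa [mul_assoc] using h1
    · rw [mulVec_mulVec, ← hmul]
      have h2 : g * g0 * g⁻¹ * g = g * g0 := by group
      rw [h2, hmul, ← mulVec_mulVec, hg0fix]⟩⟩
  have smul_val : ∀ (g : ↥L) (x : ↥P), ((g • x : ↥P) : V) = mat g *ᵥ x.1 :=
    fun _ _ => rfl
  letI actP : MulAction ↥L ↥P :=
    { one_smul := fun x => Subtype.ext (by rw [smul_val, hone, one_mulVec])
      mul_smul := fun g h x => Subtype.ext (by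
        rw [smul_val, smul_val, smul_val, hmul, ← mulVec_mulVec]) }
  letI : Fintype ↥P := hPfin.fintype
  letI : ∀ g : ↥L, Fintype ↥(MulAction.fixedBy ↥P g) := fun g => Fintype.ofFinite _
  letI : Fintype (MulAction.orbitRel.Quotient ↥L ↥P) := Fintype.ofFinite _
  letI : ∀ x : ↥P, Fintype ↥(MulAction.orbit ↥L x) := fun x => Fintype.ofFinite _
  letI : ∀ x : ↥P, Fintype ↥(MulAction.stabilizer ↥L x) := fun x => Fintype.ofFinite _
  set n := Fintype.card ↥L with hndef
  have hncard : Nat.card ↥L = n := Nat.card_eq_fintype_card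
  have hdvd : 60 ∣ n := by
    rw [← hncard, ← cardA']
    exact Subgroup.card_subgroup_dvd_card A'
  have hA'top : A' ≠ ⊤ := by
    intro h
    rw [Subgroup.subgroupOf_eq_top] at h
    exact hne (le_antisymm hAL h)
  have hn60 : n ≠ 60 := by
    intro h
    apply hA'top
    apply Subgroup.eq_top_of_card_eq
    rw [cardA', hncard, h]
  have hn120 : 120 ≤ n := by
    obtain ⟨k, hk⟩ := hdvd
    have hpos : 0 < n := Fintype.card_pos
    omega
  -- Burnside
  have burnside := MulAction.sum_card_fixedBy_eq_card_orbits_mul_card_group ↥L ↥P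
  set r := Fintype.card (MulAction.orbitRel.Quotient ↥L ↥P) with hrdef
  set pcard := Fintype.card ↥P with hpcarddef
  have fix1 : Fintype.card ↥(MulAction.fixedBy ↥P (1 : ↥L)) = pcard := by
    have h : MulAction.fixedBy ↥P (1 : ↥L) = Set.univ := by
      ext x
      simp [MulAction.mem_fixedBy]
    rw [← Nat.card_eq_fintype_card, h]
    rw [hpcarddef, ← Nat.card_eq_fintype_card]
    exact Nat.card_congr (Equiv.Set.univ _)
  have fix2 : ∀ g : ↥L, g ≠ 1 → Fintype.card ↥(MulAction.fixedBy ↥P g) = 2 := by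
    intro g hg
    obtain ⟨u, ⟨hu1, hufix⟩, huniq⟩ := fixed_vectors (morth g) (mdet g) (matne hg)
    have huP : u ∈ P := ⟨hu1, g, hg, hufix⟩
    have hmuP : -u ∈ P := ⟨by simpa using hu1, g, hg, by rw [Matrix.mulVec_neg, hufix]⟩
    have hset : MulAction.fixedBy ↥P g = {⟨u, huP⟩, ⟨-u, hmuP⟩} := by
      ext x
      simp only [MulAction.mem_fixedBy, Set.mem_insert_iff, Set.mem_singleton_iff]
      constructor
      · intro hx
        have hx' : mat g *ᵥ x.1 = x.1 := by
          have h := congrArg Subtype.val hx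
          rwa [smul_val] at h
        rcases huniq x.1 x.2.1 hx' with h | h
        · left; exact Subtype.ext h
        · right; exact Subtype.ext h
      · rintro (rfl | rfl) <;> refine Subtype.ext ?_ <;> rw [smul_val]
        · exact hufix
        · rw [Matrix.mulVec_neg, hufix]
    have hneq : (⟨u, huP⟩ : ↥P) ≠ ⟨-u, hmuP⟩ := by
      intro hc
      have h2 := congrArg (fun w : ↥P => u ⬝ᵥ (w : V)) hc
      simp only [dotProduct_neg, hu1] at h2
      linarith
    rw [← Nat.card_eq_fintype_card, hset, Nat.card_coe_set_eq, Set.ncard_pair hneq]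
  have hsplit : ∑ g : ↥L, Fintype.card ↥(MulAction.fixedBy ↥P g) = pcard + 2 * (n - 1) := by
    rw [← Finset.add_sum_erase _ _ (Finset.mem_univ (1 : ↥L)), fix1]
    congr 1
    rw [Finset.sum_congr rfl (fun g hgmem => fix2 g (Finset.ne_of_mem_erase hgmem)),
      Finset.sum_const, Finset.card_erase_of_mem (Finset.mem_univ _), Finset.card_univ,
      smul_eq_mul, mul_comm]
  have EQ : r * n = pcard + 2 * (n - 1) := by
    rw [← hsplit, burnside]
  -- orbit-stabilizer
  have orbstab : ∀ x : ↥P, Fintype.card ↥(MulAction.orbit ↥L x) *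
      Fintype.card ↥(MulAction.stabilizer ↥L x) = n :=
    fun x => MulAction.card_orbit_mul_card_stabilizer_eq_card_group ↥L x
  have stab2 : ∀ x : ↥P, 2 ≤ Fintype.card ↥(MulAction.stabilizer ↥L x) := by
    intro x
    obtain ⟨hx1, g, hg, hgfix⟩ := x.2
    have hgstab : g ∈ MulAction.stabilizer ↥L x := by
      rw [MulAction.mem_stabilizer_iff]
      exact Subtype.ext ((smul_val g x).trans hgfix)
    haveI : Nontrivial ↥(MulAction.stabilizer ↥L x) := by
      refine ⟨⟨⟨g, hgstab⟩, 1, fun hc => hg ?_⟩⟩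
      have hval := congrArg Subtype.val hc
      simpa only [OneMemClass.coe_one] using hval
    exact Fintype.one_lt_card
  have hpsum : pcard = ∑ ω : MulAction.orbitRel.Quotient ↥L ↥P,
      Fintype.card ↥(MulAction.orbit ↥L ω.out) := by
    rw [hpcarddef, Fintype.card_congr (MulAction.selfEquivSigmaOrbits ↥L ↥P)]
    exact Fintype.card_sigma
  have o_le : ∀ x : ↥P, 2 * Fintype.card ↥(MulAction.orbit ↥L x) ≤ n := by
    intro x
    have h3 : Fintype.card ↥(MulAction.orbit ↥L x) * 2 ≤
        Fintype.card ↥(MulAction.orbit ↥L x) *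
          Fintype.card ↥(MulAction.stabilizer ↥L x) :=
      Nat.mul_le_mul_left _ (stab2 x)
    rw [orbstab x] at h3
    omega
  have h2p : 2 * pcard ≤ r * n := by
    rw [hpsum, Finset.mul_sum]
    refine (Finset.sum_le_card_nsmul _ _ n ?_).trans ?_
    · intro ω _
      exact o_le _
    · rw [Finset.card_univ, smul_eq_mul]
  -- r is 2 or 3
  have hr23 : r = 2 ∨ r = 3 := by
    have hle : r ≤ 3 := by
      by_contra hc
      have h4 : 4 * n ≤ r * n := Nat.mul_le_mul_right n (by omega)
      have EQ' := EQ
      have h2p' := h2p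
      generalize r * n = m at EQ' h2p' h4
      omega
    have hge : 2 ≤ r := by
      by_contra hc
      have h1 : r * n ≤ 1 * n := Nat.mul_le_mul_right n (by omega)
      have EQ' := EQ
      generalize r * n = m at EQ' h1
      omega
    omega
  -- there is an orbit of size at most 2
  have exists_small : ∃ x : ↥P, Fintype.card ↥(MulAction.orbit ↥L x) ≤ 2 := by
    rcases hr23 with h2 | h3
    · have hpc : pcard = 2 := by
        rw [h2] at EQ
        omega
      have hΩ : Nonempty (MulAction.orbitRel.Quotient ↥L ↥P) := by
        rw [← Fintype.card_pos_iff, ← hrdef, h2]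
        norm_num
      obtain ⟨ω⟩ := hΩ
      refine ⟨ω.out, ?_⟩
      have hle : Fintype.card ↥(MulAction.orbit ↥L ω.out) ≤ pcard := by
        rw [hpsum]
        exact Finset.single_le_sum
          (f := fun (ω : MulAction.orbitRel.Quotient ↥L ↥P) =>
            Fintype.card ↥(MulAction.orbit ↥L ω.out))
          (fun i _ => Nat.zero_le _) (Finset.mem_univ ω)
      omega
    · have hsum3 : pcard = n + 2 := by
        rw [h3] at EQ
        omega
      obtain ⟨ω1, ω2, ω3, h12, h13, h23, huniv⟩ :=
        Finset.card_eq_three.mp (by rw [Finset.card_univ, ← hrdef, h3] :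
          (Finset.univ : Finset (MulAction.orbitRel.Quotient ↥L ↥P)).card = 3)
      have hdecomp : pcard = Fintype.card ↥(MulAction.orbit ↥L ω1.out) +
          Fintype.card ↥(MulAction.orbit ↥L ω2.out) +
          Fintype.card ↥(MulAction.orbit ↥L ω3.out) := by
        rw [hpsum, huniv]
        rw [Finset.sum_insert (by simp [h12, h13]), Finset.sum_pair h23, add_assoc]
      have hnt := nt (n := n)
        (o1 := Fintype.card ↥(MulAction.orbit ↥L ω1.out))
        (o2 := Fintype.card ↥(MulAction.orbit ↥L ω2.out))
        (o3 := Fintype.card ↥(MulAction.orbit ↥L ω3.out))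
        hn120 (orbstab _) (orbstab _) (orbstab _) (stab2 _) (stab2 _) (stab2 _)
        (by omega)
      rcases hnt with h | h | h
      · exact ⟨ω1.out, h⟩
      · exact ⟨ω2.out, h⟩
      · exact ⟨ω3.out, h⟩
  -- final contradiction using the stabilizer of a small orbit
  obtain ⟨x, hx⟩ := exists_small
  set H := MulAction.stabilizer ↥L x with hHdef
  have hidx : H.index ≤ 2 := by
    rw [hHdef, MulAction.index_stabilizer, ← Nat.card_coe_set_eq,
      Nat.card_eq_fintype_card]
    exact hx
  have hidx0 : H.index ≠ 0 := Subgroup.index_ne_zero_of_finite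
  have hrel : H.relIndex A' ≤ 2 := by
    calc H.relIndex A' ≤ H.relIndex ⊤ :=
        Subgroup.relIndex_le_of_le_right le_top
          (by rw [Subgroup.relIndex_top_right]; exact hidx0)
    _ = H.index := H.relIndex_top_right
    _ ≤ 2 := hidx
  set K : Subgroup ↥A' := H.subgroupOf A' with hKdef
  have hKidx : K.index = H.relIndex A' := rfl
  have hKne0 : K.index ≠ 0 := Subgroup.index_ne_zero_of_finite
  have hstab_fix : ∀ g : ↥L, g ∈ H → mat g *ᵥ x.1 = x.1 := by
    intro g hg
    have h := MulAction.mem_stabilizer_iff.mp hg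
    have h2 := congrArg Subtype.val h
    rwa [smul_val] at h2
  rcases (by omega : K.index = 1 ∨ K.index = 2) with h1 | h2
  · -- A' is contained in the stabilizer
    have hKtop : K = ⊤ := Subgroup.index_eq_one.mp h1
    apply key_contra x.1 x.2.1
    intro g hg
    have hmem : (⟨g, hg⟩ : ↥A') ∈ K := hKtop ▸ Subgroup.mem_top _
    exact hstab_fix g ((Subgroup.mem_subgroupOf).mp hmem)
  · -- K is a proper nontrivial normal subgroup of the simple group A'
    haveI hA5nontriv : Nontrivial (alternatingGroup (Fin 5)) := by
      obtain ⟨x, y, hxy⟩ := hA5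
      exact ⟨⟨x, y, fun h => hxy (by rw [h])⟩⟩
    haveI : Nontrivial ↥A' := E.toEquiv.nontrivial
    haveI : IsSimpleGroup ↥A' :=
      IsSimpleGroup.isSimpleGroup_of_surjective E.symm.toMonoidHom E.symm.surjective
    haveI hKnormal : K.Normal := normal_of_index_two K h2
    rcases hKnormal.eq_bot_or_eq_top with hbot | htop
    · rw [hbot, Subgroup.index_bot] at h2
      omega
    · rw [htop, Subgroup.index_top] at h2
      omega

end SOaux

/-- If `L` is a finite subgroup of `SO(3)` and `A ≤ L` is a subgroup
isomorphic to the alternating group `A₅`, then `A = L`; that is, `A₅` is maximal among the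
finite subgroups of `SO(3)`. -/
theorem stmt12 (L : Subgroup (Matrix.specialOrthogonalGroup (Fin 3) ℝ)) [Finite L]
    (A : Subgroup (Matrix.specialOrthogonalGroup (Fin 3) ℝ)) (hAL : A ≤ L)
    (hA : Nonempty (A ≃* alternatingGroup (Fin 5))) :
    A = L := by
  obtain ⟨e⟩ := hA
  exact SOaux.main L A hAL e
end
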